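/- arXiv:2007.05614 — 12 statements merged into one kernel-verified Lean document; each statement's English description precedes it below -/
import Mathlib

section
/- Let S be a finite nonempty type, P : S → S → ℝ a row-stochastic irreducible matrix with stationary distribution μ, D : S → S → ℝ a difficulty function with 0 ≤ D i j ≤ Dmax (Dmax ≥ 1) and R : S → S → ℝ a reward function with |R i j| ≤ Rmax. Assume Σ_i D̂ i · μ i ≥ ε for some ε > 0, and assume there exist i₀, j₀ with P i₀ j₀ > 0 and D i₀ j₀ > 0. Then there exist constants C > 0 and H₀ > 1 such that for every real H ≥ H₀ and every stationary distribution μ'_H of the probabilistic-termination matrix P'_H on Option S, one has |(Σ_i R̂'_H i · μ'_H (some i)) / (Σ_i D̂'_H i · μ'_H (some i)) − (Σ_i R̂ i · μ i) / (Σ_i D̂ i · μ i)| ≤ C / H. -/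
open Finset Filter MeasureTheory ProbabilityTheory

/-- A matrix is row-stochastic if all entries are nonnegative and every row sums to 1. -/
def RowStochastic {S : Type*} [Fintype S] (P : S → S → ℝ) : Prop :=
  (∀ i j, 0 ≤ P i j) ∧ ∀ i, ∑ j, P i j = 1

/-- A matrix is irreducible if for all `i, j` there exists `n ≥ 1` with `(P ^ n) i j > 0`. -/
def MatIrreducible {S : Type*} [Fintype S] [DecidableEq S] (P : S → S → ℝ) : Prop :=
  ∀ i j, ∃ n, 1 ≤ n ∧ 0 < ((Matrix.of P) ^ n) i j

/-- A stationary distribution of a matrix `Q`. -/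
def IsStationaryDistr {T : Type*} [Fintype T] (Q : T → T → ℝ) (ν : T → ℝ) : Prop :=
  (∀ i, 0 ≤ ν i) ∧ (∑ i, ν i = 1) ∧ ∀ j, ∑ i, ν i * Q i j = ν j

/-- The probabilistic-termination matrix `P'_H` on `Option S`, with terminal state `none`
and restart state `s₀`. -/
noncomputable def PTMatrix {S : Type*} [Fintype S] [DecidableEq S]
    (P D : S → S → ℝ) (H : ℝ) (s₀ : S) : Option S → Option S → ℝ
  | some i, some j => (1 - 1 / H) ^ (D i j) * P i j
  | some i, none => ∑ j, (1 - (1 - 1 / H) ^ (D i j)) * P i j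
  | none, some j => if j = s₀ then 1 else 0
  | none, none => 0

/-- Expected one-step reward `R̂ i = ∑ j, R i j * P i j`. -/
noncomputable def Rhat {S : Type*} [Fintype S] (P R : S → S → ℝ) (i : S) : ℝ :=
  ∑ j, R i j * P i j

/-- Expected one-step difficulty contribution `D̂ i = ∑ j, D i j * P i j`. -/
noncomputable def Dhat {S : Type*} [Fintype S] (P D : S → S → ℝ) (i : S) : ℝ :=
  ∑ j, D i j * P i j

/-- Expected one-step reward in the probabilistically terminating chain. -/
noncomputable def RhatPT {S : Type*} [Fintype S] (P R D : S → S → ℝ) (H : ℝ) (i : S) : ℝ :=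
  ∑ j, R i j * ((1 - 1 / H) ^ (D i j) * P i j)

/-- Expected one-step difficulty contribution in the probabilistically terminating chain. -/
noncomputable def DhatPT {S : Type*} [Fintype S] (P D : S → S → ℝ) (H : ℝ) (i : S) : ℝ :=
  ∑ j, D i j * ((1 - 1 / H) ^ (D i j) * P i j)

/-!
As `H → ∞` the termination matrix `P'_H` converges entrywise, at rate `Dmax / H`, to the restart
matrix, in which the chain never stops. By irreducibility the restart matrix has a unique
stationary distribution, namely `μ` on `S` and `0` at the terminal state. Uniqueness makes
`w ↦ (w A - w, ∑ w)` injective, hence bounded below on the finite-dimensional space of vectors,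
so stationary distributions depend Lipschitz-continuously on the matrix: `μ'_H = μ + O(1 / H)`.
The discounted one-step rewards and difficulties are `O(1 / H)`-close to `R̂` and `D̂`, and the
denominator stays above `ε / 2`, so the ratio moves by `O(1 / H)`.
-/

open Matrix

namespace Matrix

variable {n : Type*} [Fintype n]

theorem vecMul_pow_eq_self [DecidableEq n] {A : Matrix n n ℝ} {u : n → ℝ} (hu : u ᵥ* A = u)
    (k : ℕ) : u ᵥ* A ^ k = u := by
  induction k with
  | zero => simp
  | succ k ih => rw [pow_succ, ← vecMul_vecMul, ih, hu]

theorem IsIrreducible.pos_of_vecMul_eq_self [DecidableEq n] {A : Matrix n n ℝ}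
    (hA : A.IsIrreducible) {u : n → ℝ} (hu0 : 0 ≤ u) (hu : u ᵥ* A = u) {i : n} (hi : 0 < u i)
    (j : n) : 0 < u j := by
  obtain ⟨k, -, hk⟩ := (isIrreducible_iff_exists_pow_pos hA.nonneg).1 hA i j
  rw [← vecMul_pow_eq_self hu k]
  exact lt_of_lt_of_le (mul_pos hi hk) <| Finset.single_le_sum
    (fun l _ => mul_nonneg (hu0 l) (pow_apply_nonneg hA.nonneg k l j)) (Finset.mem_univ i)

theorem sum_vecMul_of_sum_row_eq_one {A : Matrix n n ℝ} (hrow : ∀ i, ∑ j, A i j = 1)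
    (u : n → ℝ) : ∑ j, (u ᵥ* A) j = ∑ i, u i := by
  simp only [vecMul, dotProduct]
  rw [Finset.sum_comm]
  simp [← Finset.mul_sum, hrow]

theorem abs_vecMul_eq_self {A : Matrix n n ℝ} (hA0 : ∀ i j, 0 ≤ A i j)
    (hrow : ∀ i, ∑ j, A i j = 1) {v : n → ℝ} (hv : v ᵥ* A = v) : |v| ᵥ* A = |v| := by
  have hle : ∀ j, |v| j ≤ (|v| ᵥ* A) j := fun j => by
    calc |v| j = |(v ᵥ* A) j| := by rw [hv, Pi.abs_apply]
      _ ≤ ∑ i, |v i * A i j| := Finset.abs_sum_le_sum_abs _ _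
      _ = (|v| ᵥ* A) j := by simp [vecMul, dotProduct, abs_mul, abs_of_nonneg (hA0 _ j)]
  funext j
  exact ((Finset.sum_eq_sum_iff_of_le fun j _ => hle j).1
    (sum_vecMul_of_sum_row_eq_one hrow _).symm j (Finset.mem_univ j)).symm

theorem IsIrreducible.eq_zero_of_vecMul_eq_self [DecidableEq n] {A : Matrix n n ℝ}
    (hA : A.IsIrreducible) (hrow : ∀ i, ∑ j, A i j = 1) {v : n → ℝ} (hv : v ᵥ* A = v)
    (hsum : ∑ i, v i = 0) : v = 0 := by
  -- `|v| + v = 2 max v 0` is invariant and nonnegative, so it vanishes or is everywhere positive.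
  have hu : (|v| + v) ᵥ* A = |v| + v := by
    rw [add_vecMul, abs_vecMul_eq_self hA.nonneg hrow hv, hv]
  have hu0 : 0 ≤ |v| + v := fun i =>
    show 0 ≤ |v i| + v i by linarith [neg_abs_le (v i)]
  have hnonpos : ∀ i, v i ≤ 0 := by
    intro i
    by_contra! hi
    have hpos : ∀ j, 0 < v j := fun j => by
      have := hA.pos_of_vecMul_eq_self hu0 hu (i := i) (by simp [abs_of_pos hi, hi]) j
      simp only [Pi.add_apply, Pi.abs_apply] at this
      by_contra! hj
      rw [abs_of_nonpos hj] at this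
      linarith
    exact (Finset.sum_pos (fun j _ => hpos j) ⟨i, Finset.mem_univ i⟩).ne' hsum
  funext i
  exact (Finset.sum_eq_zero_iff_of_nonpos fun j _ => hnonpos j).1 hsum i (Finset.mem_univ i)

end Matrix

section Perturbation

variable {T : Type*} [Fintype T]

noncomputable def stationaryDefect (A : Matrix T T ℝ) : (T → ℝ) →ₗ[ℝ] (T → ℝ) × ℝ :=
  (vecMulLinear A - LinearMap.id).prod (∑ i, LinearMap.proj i)

theorem stationaryDefect_apply (A : Matrix T T ℝ) (w : T → ℝ) :
    stationaryDefect A w = (w ᵥ* A - w, ∑ i, w i) := by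
  simp [stationaryDefect]

theorem norm_vecMul_sub_le {ν : T → ℝ} (hν0 : ∀ i, 0 ≤ ν i) (hν1 : ∑ i, ν i = 1)
    {A B : Matrix T T ℝ} {δ : ℝ} (hδ : 0 ≤ δ) (hAB : ∀ i j, |A i j - B i j| ≤ δ) :
    ‖ν ᵥ* A - ν ᵥ* B‖ ≤ δ := by
  refine (pi_norm_le_iff_of_nonneg hδ).2 fun j => ?_
  calc ‖(ν ᵥ* A - ν ᵥ* B) j‖ = |∑ i, ν i * (A i j - B i j)| := by
        simp [vecMul, dotProduct, mul_sub, Real.norm_eq_abs]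
    _ ≤ ∑ i, ν i * δ := by
        refine (Finset.abs_sum_le_sum_abs _ _).trans (Finset.sum_le_sum fun i _ => ?_)
        rw [abs_mul, abs_of_nonneg (hν0 i)]
        exact mul_le_mul_of_nonneg_left (hAB i j) (hν0 i)
    _ = δ := by rw [← Finset.sum_mul, hν1, one_mul]

theorem exists_abs_sub_le_of_isStationaryDistr {A : Matrix T T ℝ}
    (hA : ∀ w : T → ℝ, w ᵥ* A = w → ∑ i, w i = 0 → w = 0) :
    ∃ K > 0, ∀ (ν ν' : T → ℝ) (B : Matrix T T ℝ) (δ : ℝ), ν ᵥ* A = ν → ∑ i, ν i = 1 →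
      IsStationaryDistr B ν' → 0 ≤ δ → (∀ i j, |A i j - B i j| ≤ δ) →
      ∀ i, |ν' i - ν i| ≤ K * δ := by
  have hker : LinearMap.ker (stationaryDefect A) = ⊥ := by
    refine LinearMap.ker_eq_bot'.2 fun w hw => hA w ?_ ?_ <;>
      simp only [stationaryDefect_apply, Prod.mk_eq_zero, sub_eq_zero] at hw
    exacts [hw.1, hw.2]
  obtain ⟨K, hK, hanti⟩ := (stationaryDefect A).exists_antilipschitzWith hker
  refine ⟨K, hK, fun ν ν' B δ hν hν1 ⟨hν'0, hν'1, hν'⟩ hδ hAB i => ?_⟩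
  have hν'B : ν' ᵥ* B = ν' := funext hν'
  have hdefect : stationaryDefect A (ν' - ν) = (ν' ᵥ* A - ν' ᵥ* B, 0) := by
    rw [stationaryDefect_apply, sub_vecMul, hν, hν'B]
    simp [Finset.sum_sub_distrib, hν1, hν'1]
  calc |ν' i - ν i| ≤ ‖ν' - ν‖ := by simpa using norm_le_pi_norm (ν' - ν) i
    _ ≤ K * ‖stationaryDefect A (ν' - ν)‖ := hanti.le_mul_norm (map_zero _) _
    _ ≤ K * δ := by
        rw [hdefect, Prod.norm_mk, norm_zero, max_eq_left (norm_nonneg _)]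
        exact mul_le_mul_of_nonneg_left (norm_vecMul_sub_le hν'0 hν'1 hδ hAB) K.2

end Perturbation

theorem rpow_one_sub_one_div_mem_Icc {H t : ℝ} (hH : 1 ≤ H) (ht : 0 ≤ t) :
    (1 - 1 / H) ^ t ∈ Set.Icc 0 1 := by
  have hx : 0 < 1 / H := by positivity
  have hx1 : 1 / H ≤ 1 := div_le_one_of_le₀ hH (by linarith)
  exact ⟨Real.rpow_nonneg (by linarith) t, Real.rpow_le_one (by linarith) (by linarith) ht⟩

/-- Bernoulli's inequality for `t ≥ 1`; for `t ≤ 1` the weaker `(1 - x) ^ t ≥ 1 - x` suffices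
since `M ≥ 1`. -/
theorem one_sub_div_le_rpow_one_sub_one_div {H t M : ℝ} (hH : 1 ≤ H) (ht0 : 0 ≤ t)
    (htM : t ≤ M) (hM : 1 ≤ M) : 1 - M / H ≤ (1 - 1 / H) ^ t := by
  have hx : 0 < 1 / H := by positivity
  have hx1 : 1 / H ≤ 1 := div_le_one_of_le₀ hH (by linarith)
  rw [← mul_one_div]
  rcases le_total t 1 with ht1 | ht1
  · calc 1 - M * (1 / H) ≤ (1 - 1 / H) ^ (1 : ℝ) := by rw [Real.rpow_one]; nlinarith
      _ ≤ (1 - 1 / H) ^ t :=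
          Real.rpow_le_rpow_of_exponent_ge' (by linarith) (by linarith) ht0 ht1
  · calc 1 - M * (1 / H) ≤ 1 + t * -(1 / H) := by nlinarith
      _ ≤ (1 - 1 / H) ^ t := by
          simpa only [← sub_eq_add_neg] using
            one_add_mul_self_le_rpow_one_add (s := -(1 / H)) (by linarith) ht1

section WeightedSums

variable {ι : Type*} [Fintype ι] {p f θ : ι → ℝ} {M δ : ℝ}

theorem abs_sum_mul_le (hp0 : ∀ i, 0 ≤ p i) (hp1 : ∑ i, p i = 1) (hf : ∀ i, |f i| ≤ M) :
    |∑ i, f i * p i| ≤ M :=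
  calc |∑ i, f i * p i| ≤ ∑ i, M * p i :=
        (Finset.abs_sum_le_sum_abs _ _).trans <| Finset.sum_le_sum fun i _ => by
          rw [abs_mul, abs_of_nonneg (hp0 i)]
          exact mul_le_mul_of_nonneg_right (hf i) (hp0 i)
    _ = M := by rw [← Finset.mul_sum, hp1, mul_one]

theorem abs_sum_mul_mul_le (hp0 : ∀ i, 0 ≤ p i) (hp1 : ∑ i, p i = 1) (hf : ∀ i, |f i| ≤ M)
    (hθ : ∀ i, θ i ∈ Set.Icc 0 1) : |∑ i, f i * (θ i * p i)| ≤ M := by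
  simp_rw [← mul_assoc]
  refine abs_sum_mul_le hp0 hp1 fun i => ?_
  rw [abs_mul, abs_of_nonneg (hθ i).1]
  exact (mul_le_of_le_one_right (abs_nonneg _) (hθ i).2).trans (hf i)

theorem abs_sum_mul_mul_sub_sum_mul_le (hp0 : ∀ i, 0 ≤ p i) (hp1 : ∑ i, p i = 1)
    (hf : ∀ i, |f i| ≤ M) (hθ : ∀ i, θ i ∈ Set.Icc 0 1) (hθδ : ∀ i, 1 - δ ≤ θ i) :
    |∑ i, f i * (θ i * p i) - ∑ i, f i * p i| ≤ M * δ := by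
  rw [← Finset.sum_sub_distrib,
    Finset.sum_congr rfl fun i _ => show _ = f i * (θ i - 1) * p i by ring]
  refine abs_sum_mul_le hp0 hp1 fun i => ?_
  rw [abs_mul, abs_of_nonpos (a := θ i - 1) (by linarith [(hθ i).2])]
  exact mul_le_mul (hf i) (by linarith [hθδ i]) (by linarith [(hθ i).2])
    ((abs_nonneg _).trans (hf i))

theorem abs_sum_mul_sub_sum_mul_le {f' ν ν' : ι → ℝ} {η : ℝ} (hν0 : ∀ i, 0 ≤ ν i)
    (hν1 : ∑ i, ν i = 1) (hf' : ∀ i, |f' i| ≤ M) (hff' : ∀ i, |f' i - f i| ≤ δ)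
    (hνν' : ∀ i, |ν' i - ν i| ≤ η) :
    |∑ i, f' i * ν' i - ∑ i, f i * ν i| ≤ Fintype.card ι * M * η + δ := by
  have hsplit : ∑ i, f' i * ν' i - ∑ i, f i * ν i
      = ∑ i, f' i * (ν' i - ν i) + ∑ i, (f' i - f i) * ν i := by
    rw [← Finset.sum_sub_distrib, ← Finset.sum_add_distrib]
    exact Finset.sum_congr rfl fun i _ => by ring
  have hfirst : |∑ i, f' i * (ν' i - ν i)| ≤ Fintype.card ι * M * η :=
    calc |∑ i, f' i * (ν' i - ν i)| ≤ ∑ _i : ι, M * η :=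
          (Finset.abs_sum_le_sum_abs _ _).trans <| Finset.sum_le_sum fun i _ => by
            rw [abs_mul]
            exact mul_le_mul (hf' i) (hνν' i) (abs_nonneg _) ((abs_nonneg _).trans (hf' i))
      _ = Fintype.card ι * M * η := by simp [mul_assoc]
  rw [hsplit]
  exact (abs_add_le _ _).trans (add_le_add hfirst (abs_sum_mul_le hν0 hν1 hff'))

theorem abs_sum_sum_mul_mul_sub_sum_sum_mul_le {F θ P : ι → ι → ℝ} {ν ν' : ι → ℝ} {K : ℝ}
    (hP : RowStochastic P) (hν0 : ∀ i, 0 ≤ ν i) (hν1 : ∑ i, ν i = 1) (hF : ∀ i j, |F i j| ≤ M)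
    (hθ : ∀ i j, θ i j ∈ Set.Icc 0 1) (hθδ : ∀ i j, 1 - δ ≤ θ i j)
    (hνν' : ∀ i, |ν' i - ν i| ≤ K * δ) :
    |∑ i, (∑ j, F i j * (θ i j * P i j)) * ν' i - ∑ i, (∑ j, F i j * P i j) * ν i|
      ≤ M * ((Fintype.card ι * K + 1) * δ) :=
  (abs_sum_mul_sub_sum_mul_le hν0 hν1
    (fun i => abs_sum_mul_mul_le (hP.1 i) (hP.2 i) (hF i) (hθ i))
    (fun i => abs_sum_mul_mul_sub_sum_mul_le (hP.1 i) (hP.2 i) (hF i) (hθ i) (hθδ i))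
    hνν').trans_eq (by ring)

end WeightedSums

theorem abs_div_sub_div_le {a a' b b' A B ε : ℝ} (hA : |a| ≤ A) (hε : 0 < ε) (hb : ε ≤ b)
    (hbB : b ≤ B) (hbb' : |b' - b| ≤ ε / 2) :
    |a' / b' - a / b| ≤ 2 * (|a' - a| * B + A * |b' - b|) / ε ^ 2 := by
  have hb0 : 0 < b := hε.trans_le hb
  have hb' : ε / 2 ≤ b' := by linarith [(abs_le.1 hbb').1]
  have hb'0 : 0 < b' := by linarith
  rw [div_sub_div _ _ hb'0.ne' hb0.ne', abs_div, abs_of_pos (mul_pos hb'0 hb0)]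
  have hnum : |a' * b - b' * a| ≤ |a' - a| * B + A * |b' - b| :=
    calc |a' * b - b' * a| = |(a' - a) * b - a * (b' - b)| := by ring_nf
      _ ≤ |a' - a| * B + A * |b' - b| := by
          refine (abs_sub _ _).trans (add_le_add ?_ ?_) <;> rw [abs_mul]
          · rw [abs_of_pos hb0]; exact mul_le_mul_of_nonneg_left hbB (abs_nonneg _)
          · exact mul_le_mul_of_nonneg_right hA (abs_nonneg _)
  calc |a' * b - b' * a| / (b' * b) ≤ (|a' - a| * B + A * |b' - b|) / (ε / 2 * ε) :=
        div_le_div₀ ((abs_nonneg _).trans hnum) hnum (by positivity)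
          (mul_le_mul hb' hb hε.le hb'0.le)
    _ = 2 * (|a' - a| * B + A * |b' - b|) / ε ^ 2 := by field_simp

section Restart

variable {S : Type*} [Fintype S] [DecidableEq S]

/-- The limit of `PTMatrix P D H s₀` as `H → ∞`: the chain `P` never stops, and `none` restarts
at `s₀`. -/
def restartMatrix (P : S → S → ℝ) (s₀ : S) : Matrix (Option S) (Option S) ℝ
  | some i, some j => P i j
  | some _, none => 0
  | none, some j => if j = s₀ then 1 else 0
  | none, none => 0

theorem restartMatrix_eq_zero_of_vecMul_eq_self {P : S → S → ℝ} {s₀ : S} (hP : RowStochastic P)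
    (hirr : (Matrix.of P).IsIrreducible) {w : Option S → ℝ}
    (hw : w ᵥ* restartMatrix P s₀ = w) (hsum : ∑ i, w i = 0) : w = 0 := by
  have hw_apply (j : Option S) : ∑ i, w i * restartMatrix P s₀ i j = w j := congrFun hw j
  have hnone : w none = 0 := by simpa [Fintype.sum_option, restartMatrix] using (hw_apply none).symm
  have hsome : (fun i => w (some i)) = 0 := by
    refine hirr.eq_zero_of_vecMul_eq_self hP.2 (funext fun j => ?_) ?_
    · simpa [vecMul, dotProduct, Fintype.sum_option, restartMatrix, hnone] using hw_apply (some j)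
    · simpa [Fintype.sum_option, hnone] using hsum
  funext i
  cases i with
  | none => exact hnone
  | some i => exact congrFun hsome i

theorem vecMul_restartMatrix_elim {P : S → S → ℝ} {s₀ : S} {μ : S → ℝ}
    (hμ : ∀ j, ∑ i, μ i * P i j = μ j) :
    (Option.elim · 0 μ) ᵥ* restartMatrix P s₀ = (Option.elim · 0 μ) := by
  funext j
  cases j <;> simp [vecMul, dotProduct, Fintype.sum_option, restartMatrix, hμ]

theorem abs_restartMatrix_sub_PTMatrix_le {P D : S → S → ℝ} {H δ : ℝ} (s₀ : S)
    (hP : RowStochastic P) (hθ : ∀ i j, (1 - 1 / H) ^ D i j ∈ Set.Icc 0 1)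
    (hθδ : ∀ i j, 1 - δ ≤ (1 - 1 / H) ^ D i j) (hδ : 0 ≤ δ) (i j : Option S) :
    |restartMatrix P s₀ i j - PTMatrix P D H s₀ i j| ≤ δ := by
  have hstep (i j : S) : |1 - (1 - 1 / H) ^ D i j| ≤ δ :=
    abs_le.2 ⟨by linarith [(hθ i j).2], by linarith [hθδ i j]⟩
  cases i with
  | none => cases j <;> simp [restartMatrix, PTMatrix, hδ]
  | some i =>
    cases j with
    | none =>
      simpa [restartMatrix, PTMatrix] using abs_sum_mul_le (hP.1 i) (hP.2 i) (hstep i)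
    | some j =>
      rw [restartMatrix, PTMatrix, ← one_sub_mul, abs_mul, abs_of_nonneg (hP.1 i j)]
      have hPij : P i j ≤ 1 :=
        hP.2 i ▸ Finset.single_le_sum (fun k _ => hP.1 i k) (Finset.mem_univ j)
      simpa using mul_le_mul (hstep i j) hPij (hP.1 i j) hδ

theorem exists_abs_sub_le_of_isStationaryDistr_PTMatrix {P : S → S → ℝ} {μ : S → ℝ} (s₀ : S)
    (hP : RowStochastic P) (hirr : MatIrreducible P) (hμ : ∀ j, ∑ i, μ i * P i j = μ j)
    (hμ1 : ∑ i, μ i = 1) :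
    ∃ K > 0, ∀ (D : S → S → ℝ) (H δ : ℝ) (μ' : Option S → ℝ),
      (∀ i j, (1 - 1 / H) ^ D i j ∈ Set.Icc 0 1) → (∀ i j, 1 - δ ≤ (1 - 1 / H) ^ D i j) →
      0 ≤ δ → IsStationaryDistr (PTMatrix P D H s₀) μ' → ∀ i, |μ' (some i) - μ i| ≤ K * δ := by
  obtain ⟨K, hK, hclose⟩ := exists_abs_sub_le_of_isStationaryDistr fun _ =>
    restartMatrix_eq_zero_of_vecMul_eq_self (s₀ := s₀) hP
      ((isIrreducible_iff_exists_pow_pos hP.1).2 hirr)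
  exact ⟨K, hK, fun D H δ μ' hθ hθδ hδ hμ' i =>
    hclose _ μ' _ _ (vecMul_restartMatrix_elim hμ) (by simp [Fintype.sum_option, hμ1]) hμ' hδ
      (abs_restartMatrix_sub_PTMatrix_le s₀ hP hθ hθδ hδ) (some i)⟩

end Restart

theorem pto_main_theorem_general {S : Type*} [Fintype S] [DecidableEq S]
    (P D R : S → S → ℝ) (μ : S → ℝ) (Rmax Dmax ε : ℝ) (s₀ : S)
    (hP : RowStochastic P) (hirr : MatIrreducible P) (hμ : IsStationaryDistr P μ)
    (hD0 : ∀ i j, 0 ≤ D i j) (hD1 : ∀ i j, D i j ≤ Dmax) (hDmax : 1 ≤ Dmax)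
    (hR : ∀ i j, |R i j| ≤ Rmax)
    (hε : 0 < ε) (hεle : ε ≤ ∑ i, Dhat P D i * μ i) :
    ∃ C > 0, ∃ H₀ > 1, ∀ H, H₀ ≤ H → ∀ μ' : Option S → ℝ,
      IsStationaryDistr (PTMatrix P D H s₀) μ' →
      |(∑ i, RhatPT P R D H i * μ' (some i)) / (∑ i, DhatPT P D H i * μ' (some i)) -
        (∑ i, Rhat P R i * μ i) / (∑ i, Dhat P D i * μ i)| ≤ C / H := by
  obtain ⟨hμ0, hμ1, hμP⟩ := hμ
  obtain ⟨K, hK, hclose⟩ := exists_abs_sub_le_of_isStationaryDistr_PTMatrix s₀ hP hirr hμP hμ1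
  have hRmax : 0 ≤ Rmax := (abs_nonneg _).trans (hR s₀ s₀)
  have hDabs (i j : S) : |D i j| ≤ Dmax := (abs_of_nonneg (hD0 i j)).trans_le (hD1 i j)
  set L := (Fintype.card S * K + 1) * Dmax
  refine ⟨4 * Rmax * Dmax * L / ε ^ 2 + 1, by positivity, 1 + 2 * Dmax * L / ε,
    by linarith [show 0 < 2 * Dmax * L / ε by positivity], fun H hH μ' hμ' => ?_⟩
  have hH1 : 1 ≤ H := by linarith [show 0 < 2 * Dmax * L / ε by positivity]
  have hθ (i j : S) := rpow_one_sub_one_div_mem_Icc hH1 (hD0 i j)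
  have hθδ (i j : S) := one_sub_div_le_rpow_one_sub_one_div hH1 (hD0 i j) (hD1 i j) hDmax
  have hμ'μ := hclose D H _ μ' hθ hθδ (by positivity) hμ'
  have hnum : |∑ i, RhatPT P R D H i * μ' (some i) - ∑ i, Rhat P R i * μ i| ≤ Rmax * L / H :=
    (abs_sum_sum_mul_mul_sub_sum_sum_mul_le hP hμ0 hμ1 hR hθ hθδ hμ'μ).trans_eq (by ring)
  have hden : |∑ i, DhatPT P D H i * μ' (some i) - ∑ i, Dhat P D i * μ i| ≤ Dmax * L / H :=
    (abs_sum_sum_mul_mul_sub_sum_sum_mul_le hP hμ0 hμ1 hDabs hθ hθδ hμ'μ).trans_eq (by ring)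
  have hLH : Dmax * L / H ≤ ε / 2 := by
    have : 2 * Dmax * L ≤ (H - 1) * ε := (div_le_iff₀ hε).1 (by linarith)
    rw [div_le_iff₀ (by linarith)]
    nlinarith
  calc _ ≤ 2 * (Rmax * L / H * Dmax + Rmax * (Dmax * L / H)) / ε ^ 2 := by
        refine (abs_div_sub_div_le (abs_sum_mul_le hμ0 hμ1 fun i =>
          abs_sum_mul_le (hP.1 i) (hP.2 i) (hR i)) hε hεle ((le_abs_self _).trans
            (abs_sum_mul_le hμ0 hμ1 fun i => abs_sum_mul_le (hP.1 i) (hP.2 i) (hDabs i)))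
          (hden.trans hLH)).trans ?_
        gcongr
        exact hnum
    _ = 4 * Rmax * Dmax * L / ε ^ 2 / H := by ring
    _ ≤ (4 * Rmax * Dmax * L / ε ^ 2 + 1) / H := by gcongr; linarith

/-- **Theorem 1 (PTO approximation error, stationary-distribution form).**
For all sufficiently large expected horizons `H`, the PT revenue ratio is within `C / H`
of the ARR revenue ratio. -/
theorem pto_main_theorem {S : Type*} [Fintype S] [Nonempty S] [DecidableEq S]
    (P D R : S → S → ℝ) (μ : S → ℝ) (Rmax Dmax ε : ℝ) (s₀ : S)
    (hP : RowStochastic P) (hirr : MatIrreducible P) (hμ : IsStationaryDistr P μ)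
    (hD0 : ∀ i j, 0 ≤ D i j) (hD1 : ∀ i j, D i j ≤ Dmax) (hDmax : 1 ≤ Dmax)
    (hR : ∀ i j, |R i j| ≤ Rmax)
    (hε : 0 < ε) (hεle : ε ≤ ∑ i, Dhat P D i * μ i)
    (hpos : ∃ i₀ j₀, 0 < P i₀ j₀ ∧ 0 < D i₀ j₀) :
    ∃ C > 0, ∃ H₀ > 1, ∀ H, H₀ ≤ H → ∀ μ' : Option S → ℝ,
      IsStationaryDistr (PTMatrix P D H s₀) μ' →
      |(∑ i, RhatPT P R D H i * μ' (some i)) / (∑ i, DhatPT P D H i * μ' (some i)) -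
        (∑ i, Rhat P R i * μ i) / (∑ i, Dhat P D i * μ i)| ≤ C / H :=
  pto_main_theorem_general P D R μ Rmax Dmax ε s₀ hP hirr hμ hD0 hD1 hDmax hR hε hεle
end

section
/- Let S be a finite nonempty type, P : S → S → ℝ a row-stochastic irreducible matrix, D : S → S → ℝ with D i j ≥ 0 for all i, j, H > 1 a real number, and s₀ ∈ S a fixed restart state. Assume there exist i₀, j₀ ∈ S with P i₀ j₀ > 0 and D i₀ j₀ > 0. Then the probabilistic-termination matrix P'_H on Option S is row-stochastic and irreducible: for every pair of states x, y ∈ Option S there exists n ≥ 1 with (P'_H)^n x y > 0. -/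
open Finset Filter MeasureTheory ProbabilityTheory

/-- A stationary distribution of a matrix `Q`. -/
def IsStationaryDist {T : Type*} [Fintype T] (Q : T → T → ℝ) (ν : T → ℝ) : Prop :=
  (∀ i, 0 ≤ ν i) ∧ (∑ i, ν i = 1) ∧ ∀ j, ∑ i, ν i * Q i j = ν j

/-! Every state of `P` reaches every other along positive entries, and these transitions survive
in `P'_H` with the positive factor `(1 - 1/H) ^ D i j`. The edge `i₀ → j₀` with `D i₀ j₀ > 0`
terminates with positive probability, so the terminal state is reached from every state, and
it leads back into `S` through the restart edge `none → some s₀`. -/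

open Relation

namespace Matrix

variable {n R : Type*} [Fintype n] [DecidableEq n] [Semiring R] [LinearOrder R]
  [IsStrictOrderedRing R] {A : Matrix n n R}

theorem pow_succ_apply_pos_iff (hA : ∀ i j, 0 ≤ A i j) (k : ℕ) (i j : n) :
    0 < (A ^ (k + 1)) i j ↔ ∃ l, 0 < (A ^ k) i l ∧ 0 < A l j := by
  have hterm : ∀ l, 0 ≤ (A ^ k) i l * A l j := fun l =>
    mul_nonneg (pow_apply_nonneg hA k i l) (hA l j)
  rw [pow_succ, mul_apply, Finset.sum_pos_iff_of_nonneg fun l _ => hterm l]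
  refine ⟨fun ⟨l, _, hl⟩ => ⟨l, pos_of_mul_pos_left hl (hA l j),
    pos_of_mul_pos_right hl (pow_apply_nonneg hA k i l)⟩, fun ⟨l, hil, hlj⟩ =>
    ⟨l, Finset.mem_univ l, mul_pos hil hlj⟩⟩

theorem exists_pow_apply_pos_iff_transGen (hA : ∀ i j, 0 ≤ A i j) (i j : n) :
    (∃ k, 1 ≤ k ∧ 0 < (A ^ k) i j) ↔ TransGen (fun a b => 0 < A a b) i j := by
  constructor
  · rintro ⟨k, hk, hpos⟩
    induction k, hk using Nat.le_induction generalizing j with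
    | base => exact .single (by simpa using hpos)
    | succ k _ ih =>
      obtain ⟨l, hil, hlj⟩ := (pow_succ_apply_pos_iff hA k i j).1 hpos
      exact (ih l hil).tail hlj
  · intro h
    induction h with
    | single hij => exact ⟨1, le_rfl, by simpa using hij⟩
    | tail _ hbc ih =>
      obtain ⟨k, hk, hpos⟩ := ih
      exact ⟨k + 1, hk.trans k.le_succ, (pow_succ_apply_pos_iff hA k _ _).2 ⟨_, hpos, hbc⟩⟩

end Matrix

theorem matIrreducible_iff_forall_transGen {S : Type*} [Fintype S] [DecidableEq S]
    {Q : S → S → ℝ} (hQ : ∀ i j, 0 ≤ Q i j) :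
    MatIrreducible Q ↔ ∀ i j, TransGen (fun a b => 0 < Q a b) i j :=
  forall₂_congr fun i j => Matrix.exists_pow_apply_pos_iff_transGen (A := Matrix.of Q) hQ i j

theorem one_sub_one_div_pos {H : ℝ} (hH : 1 < H) : 0 < 1 - 1 / H :=
  sub_pos.2 ((div_lt_one (one_pos.trans hH)).2 hH)

theorem one_sub_one_div_lt_one {H : ℝ} (hH : 0 < H) : 1 - 1 / H < 1 :=
  sub_lt_self 1 (one_div_pos.2 hH)

theorem Real.one_sub_rpow_nonneg {a d : ℝ} (ha₀ : 0 ≤ a) (ha₁ : a ≤ 1) (hd : 0 ≤ d) :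
    0 ≤ 1 - a ^ d :=
  sub_nonneg.2 (Real.rpow_le_one ha₀ ha₁ hd)

section PTMatrix

variable {S : Type*} [Fintype S] [DecidableEq S] {P D : S → S → ℝ} {H : ℝ} {s₀ : S}

theorem ptMatrix_nonneg (hP : ∀ i j, 0 ≤ P i j) (hD : ∀ i j, 0 ≤ D i j) (hH : 1 < H) :
    ∀ x y, 0 ≤ PTMatrix P D H s₀ x y
  | some i, some j => mul_nonneg (Real.rpow_nonneg (one_sub_one_div_pos hH).le _) (hP i j)
  | some i, none => Finset.sum_nonneg fun j _ => mul_nonneg (Real.one_sub_rpow_nonneg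
      (one_sub_one_div_pos hH).le (one_sub_one_div_lt_one (one_pos.trans hH)).le (hD i j))
      (hP i j)
  | none, some j => by unfold PTMatrix; positivity
  | none, none => le_rfl

theorem ptMatrix_row_sum (hP : ∀ i, ∑ j, P i j = 1) :
    ∀ x, ∑ y, PTMatrix P D H s₀ x y = 1
  | some i => by
    simp only [Fintype.sum_option, PTMatrix, ← Finset.sum_add_distrib, sub_mul, one_mul,
      sub_add_cancel]
    exact hP i
  | none => by simp [Fintype.sum_option, PTMatrix]

theorem rowStochastic_ptMatrix (hP : RowStochastic P) (hD : ∀ i j, 0 ≤ D i j) (hH : 1 < H) :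
    RowStochastic (PTMatrix P D H s₀) :=
  ⟨ptMatrix_nonneg hP.1 hD hH, ptMatrix_row_sum hP.2⟩

theorem ptMatrix_some_some_pos (hH : 1 < H) {i j : S} (hij : 0 < P i j) :
    0 < PTMatrix P D H s₀ (some i) (some j) :=
  mul_pos (Real.rpow_pos_of_pos (one_sub_one_div_pos hH) _) hij

theorem ptMatrix_some_none_pos (hP : ∀ i j, 0 ≤ P i j) (hD : ∀ i j, 0 ≤ D i j) (hH : 1 < H)
    {i j : S} (hPij : 0 < P i j) (hDij : 0 < D i j) :
    0 < PTMatrix P D H s₀ (some i) none := by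
  have ha₀ := one_sub_one_div_pos hH
  have ha₁ := one_sub_one_div_lt_one (one_pos.trans hH)
  refine Finset.sum_pos' (fun k _ => ?_)
    ⟨j, Finset.mem_univ j, mul_pos (sub_pos.2 (Real.rpow_lt_one ha₀.le ha₁ hDij)) hPij⟩
  exact mul_nonneg (Real.one_sub_rpow_nonneg ha₀.le ha₁.le (hD i k)) (hP i k)

theorem ptMatrix_none_some_pos : 0 < PTMatrix P D H s₀ none (some s₀) := by
  simp [PTMatrix]

end PTMatrix

theorem ptMatrix_rowStochastic_and_irreducible_general {S : Type*} [Fintype S]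
    [DecidableEq S] (P D : S → S → ℝ) (H : ℝ) (s₀ : S)
    (hP : RowStochastic P) (hirr : MatIrreducible P)
    (hD0 : ∀ i j, 0 ≤ D i j) (hH : 1 < H)
    (hpos : ∃ i₀ j₀, 0 < P i₀ j₀ ∧ 0 < D i₀ j₀) :
    RowStochastic (PTMatrix P D H s₀) ∧ MatIrreducible (PTMatrix P D H s₀) := by
  obtain ⟨i₀, j₀, hPij, hDij⟩ := hpos
  have hstoch := rowStochastic_ptMatrix (s₀ := s₀) hP hD0 hH
  refine ⟨hstoch, (matIrreducible_iff_forall_transGen hstoch.1).2 ?_⟩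
  have hsome : ∀ i j, TransGen (fun x y => 0 < PTMatrix P D H s₀ x y) (some i) (some j) :=
    fun i j => TransGen.lift some (fun _ _ => ptMatrix_some_some_pos hH) i j
      ((matIrreducible_iff_forall_transGen hP.1).1 hirr i j)
  have hexit : ∀ i, TransGen (fun x y => 0 < PTMatrix P D H s₀ x y) (some i) none :=
    fun i => (hsome i i₀).tail (ptMatrix_some_none_pos hP.1 hD0 hH hPij hDij)
  have henter : ∀ j, TransGen (fun x y => 0 < PTMatrix P D H s₀ x y) none (some j) :=
    fun j => (hsome s₀ j).head ptMatrix_none_some_pos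
  rintro (_ | i) (_ | j)
  · exact (henter i₀).trans (hexit i₀)
  · exact henter j
  · exact hexit i
  · exact hsome i j

/-- **Lemma 2 (irreducibility part).** The probabilistic-termination matrix with restart is
row-stochastic and irreducible. -/
theorem ptMatrix_rowStochastic_and_irreducible {S : Type*} [Fintype S] [Nonempty S]
    [DecidableEq S] (P D : S → S → ℝ) (H : ℝ) (s₀ : S)
    (hP : RowStochastic P) (hirr : MatIrreducible P)
    (hD0 : ∀ i j, 0 ≤ D i j) (hH : 1 < H)
    (hpos : ∃ i₀ j₀, 0 < P i₀ j₀ ∧ 0 < D i₀ j₀) :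
    RowStochastic (PTMatrix P D H s₀) ∧ MatIrreducible (PTMatrix P D H s₀) :=
  ptMatrix_rowStochastic_and_irreducible_general P D H s₀ hP hirr hD0 hH hpos
end

section
/- Let (Ω, ℱ, ℙ) be a probability space, H > 1 and Dmax ≥ 1 real numbers, and λ = −log(1 − 1/H). Let Z : Ω → ℝ be exponentially distributed with rate λ, let (D_t)_{t ≥ 1} be real random variables with 0 ≤ D_t ≤ Dmax almost surely, such that Z is independent of the σ-algebra generated by the family (D_t)_{t ≥ 1}, and assume Σ_{t=1}^T D_t → ∞ almost surely as T → ∞. Define the stopping index Term(ω) as the least T ≥ 1 with Σ_{t=1}^T D_t(ω) > Z(ω). Then H − Dmax − 1 ≤ E[Σ_{t=1}^{Term} D_t] ≤ H + Dmax. -/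
/-!
Pathwise, the stopped sum overshoots the threshold by at most one increment: the sum up to
`Term - 1` is at most `Z`, so `Z < ∑_{t ≤ Term} D t ≤ Z + Dmax`. Taking expectations puts the
expected stopped sum within `Dmax` above `𝔼 Z = 1 / λ`, and the inequalities
`1 - 1/x ≤ log x ≤ x - 1` at `x = 1 - 1/H` give `H - 1 ≤ 1 / λ ≤ H`.
-/

open Filter MeasureTheory ProbabilityTheory Real Set

lemma inv_neg_log_one_sub_one_div_mem_Icc {H : ℝ} (hH : 1 < H) :
    (-log (1 - 1 / H))⁻¹ ∈ Icc (H - 1) H := by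
  have hx : 0 < 1 - 1 / H := by
    rw [sub_pos, div_lt_one (by linarith)]
    exact hH
  have hlower : 1 / H ≤ -log (1 - 1 / H) := by linarith [log_le_sub_one_of_pos hx]
  have hupper : -log (1 - 1 / H) ≤ (H - 1)⁻¹ := by
    have hinv : (1 - 1 / H)⁻¹ = 1 + (H - 1)⁻¹ := by
      have : H - 1 ≠ 0 := by linarith
      field_simp
      ring
    linarith [one_sub_inv_le_log_of_pos hx]
  have hpos : 0 < -log (1 - 1 / H) := lt_of_lt_of_le (by positivity) hlower
  constructor
  · simpa using inv_anti₀ hpos hupper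
  · simpa using inv_anti₀ (by positivity) hlower

section ExponentialMean

lemma measurable_gammaPDF (a r : ℝ) : Measurable (gammaPDF a r) :=
  (measurable_gammaPDFReal a r).ennreal_ofReal

lemma ae_nonneg_expMeasure (r : ℝ) : ∀ᵐ x ∂expMeasure r, 0 ≤ x := by
  have hneg : expMeasure r (Iio 0) = 0 := by
    rw [expMeasure, gammaMeasure, withDensity_apply _ measurableSet_Iio]
    exact lintegral_gammaPDF_of_nonpos le_rfl
  simp only [ae_iff, not_le]
  exact hneg

variable {r : ℝ}

lemma lintegral_ofReal_expMeasure (hr : 0 < r) :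
    ∫⁻ x, ENNReal.ofReal x ∂expMeasure r = ENNReal.ofReal r⁻¹ := by
  -- `x` times the `Γ(1, r)` density is `r⁻¹` times the `Γ(2, r)` density.
  have hdensity : ∀ x,
      gammaPDF 1 r x * ENNReal.ofReal x = ENNReal.ofReal r⁻¹ * gammaPDF 2 r x := by
    intro x
    rcases lt_or_ge x 0 with hx | hx
    · simp [gammaPDF_of_neg hx, ENNReal.ofReal_of_nonpos hx.le]
    · rw [gammaPDF_of_nonneg hx, gammaPDF_of_nonneg hx, ← ENNReal.ofReal_mul (by positivity),
        ← ENNReal.ofReal_mul (by positivity)]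
      congr 1
      norm_num [Real.Gamma_two]
      field_simp
  rw [expMeasure, gammaMeasure, lintegral_withDensity_eq_lintegral_mul _
    (measurable_gammaPDF 1 r) ENNReal.measurable_ofReal]
  simp only [Pi.mul_apply, hdensity]
  rw [lintegral_const_mul _ (measurable_gammaPDF 2 r), lintegral_gammaPDF_eq_one two_pos hr,
    mul_one]

lemma integrable_id_expMeasure (hr : 0 < r) : Integrable id (expMeasure r) :=
  ⟨aestronglyMeasurable_id, (hasFiniteIntegral_iff_ofReal (ae_nonneg_expMeasure r)).2 <| by
    rw [lintegral_ofReal_expMeasure hr]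
    exact ENNReal.ofReal_lt_top⟩

lemma integral_id_expMeasure (hr : 0 < r) : ∫ x, x ∂expMeasure r = r⁻¹ := by
  rw [integral_eq_lintegral_of_nonneg_ae (ae_nonneg_expMeasure r) aestronglyMeasurable_id,
    lintegral_ofReal_expMeasure hr, ENNReal.toReal_ofReal (inv_nonneg.2 hr.le)]

end ExponentialMean

section Measurability

variable {α : Type*} [MeasurableSpace α]

lemma measurable_sInf_setOf_nat {p : ℕ → α → Prop} (hp : ∀ n, Measurable (p n)) :
    Measurable fun x => sInf {n | p n x} := by
  classical
  have hq : ∀ x, ∃ n, p n x ∨ ∀ m, ¬ p m x := fun x => by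
    by_cases h : ∃ n, p n x
    · exact h.imp fun _ => Or.inl
    · exact ⟨0, .inr (not_exists.1 h)⟩
  have hfind : (fun x => sInf {n | p n x}) = fun x => Nat.find (hq x) := by
    funext x
    by_cases h : ∃ n, p n x
    · refine le_antisymm (Nat.sInf_le ?_) (Nat.find_min' _ (.inl (Nat.sInf_mem h)))
      exact (Nat.find_spec (hq x)).resolve_right fun hnone => hnone _ h.choose_spec
    · have hempty : {n | p n x} = ∅ := eq_empty_of_forall_notMem fun n hn => h ⟨n, hn⟩
      rw [hempty, Nat.sInf_empty, eq_comm, Nat.find_eq_zero]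
      exact .inr (not_exists.1 h)
  rw [hfind]
  exact measurable_find hq fun k => ((hp k).or (.forall fun m => (hp m).not)).setOf

lemma measurable_apply_index {ι β : Type*} [MeasurableSpace ι] [Countable ι]
    [MeasurableSingletonClass ι] [MeasurableSpace β] {f : ι → α → β} (hf : ∀ i, Measurable (f i))
    {τ : α → ι} (hτ : Measurable τ) : Measurable fun x => f (τ x) x :=
  (measurable_from_prod_countable_left (f := fun p : α × ι => f p.2 p.1) hf).comp
    (measurable_id.prodMk hτ)

end Measurability

lemma first_passage_sum_bounds {d : ℕ → ℝ} {z c : ℝ} {N : ℕ} (hz : 0 ≤ z)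
    (hd : ∀ t, 1 ≤ t → d t ≤ c) (hpass : ∃ T, 1 ≤ T ∧ z < ∑ t ∈ Finset.Icc 1 T, d t)
    (hN : N = sInf {T : ℕ | 1 ≤ T ∧ z < ∑ t ∈ Finset.Icc 1 T, d t}) :
    z < ∑ t ∈ Finset.Icc 1 N, d t ∧ ∑ t ∈ Finset.Icc 1 N, d t ≤ z + c := by
  obtain ⟨hN1, hpassN⟩ : 1 ≤ N ∧ z < ∑ t ∈ Finset.Icc 1 N, d t := hN ▸ Nat.sInf_mem hpass
  obtain ⟨m, rfl⟩ : ∃ m, N = m + 1 := ⟨N - 1, by omega⟩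
  have hbefore : ∑ t ∈ Finset.Icc 1 m, d t ≤ z := by
    have hm : m ∉ {T : ℕ | 1 ≤ T ∧ z < ∑ t ∈ Finset.Icc 1 T, d t} :=
      Nat.notMem_of_lt_sInf (by rw [← hN]; omega)
    rcases Nat.eq_zero_or_pos m with rfl | hm1
    · simpa using hz
    · exact not_lt.1 fun h => hm ⟨hm1, h⟩
  rw [Finset.sum_Icc_succ_top (by omega)] at hpassN ⊢
  exact ⟨hpassN, by linarith [hd (m + 1) (by omega)]⟩

lemma integral_mem_Icc_of_ae_mem_Icc {Ω : Type*} [MeasurableSpace Ω] {μ : Measure Ω}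
    [IsProbabilityMeasure μ] {X Y : Ω → ℝ} {c : ℝ} (hX : Integrable X μ)
    (hY : AEStronglyMeasurable Y μ) (hXY : ∀ᵐ ω ∂μ, Y ω ∈ Icc (X ω) (X ω + c)) :
    ∫ ω, Y ω ∂μ ∈ Icc (∫ ω, X ω ∂μ) (∫ ω, X ω ∂μ + c) := by
  have hXc : Integrable (fun ω => X ω + c) μ := hX.add (integrable_const c)
  have hYint : Integrable Y μ :=
    integrable_of_le_of_le hY (hXY.mono fun _ h => h.1) (hXY.mono fun _ h => h.2) hX hXc
  refine ⟨integral_mono_ae hX hYint (hXY.mono fun _ h => h.1), ?_⟩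
  calc ∫ ω, Y ω ∂μ ≤ ∫ ω, (X ω + c) ∂μ := integral_mono_ae hYint hXc (hXY.mono fun _ h => h.2)
    _ = ∫ ω, X ω ∂μ + c := by
      rw [integral_add hX (integrable_const c), integral_const, probReal_univ, one_smul]

theorem expected_horizon_lemma_general {Ω : Type*} [MeasurableSpace Ω]
    (Pr : Measure Ω) [IsProbabilityMeasure Pr]
    (H Dmax lam : ℝ) (hH : 1 < H) (hDmax : 1 ≤ Dmax)
    (hlam : lam = -Real.log (1 - 1 / H))
    (Z : Ω → ℝ) (hZmeas : Measurable Z)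
    (hZ : Measure.map Z Pr = expMeasure lam)
    (D : ℕ → Ω → ℝ) (hDmeas : ∀ t, Measurable (D t))
    (hDbdd : ∀ t, 1 ≤ t → ∀ᵐ ω ∂Pr, 0 ≤ D t ω ∧ D t ω ≤ Dmax)
    (hdiv : ∀ᵐ ω ∂Pr,
      Tendsto (fun T => ∑ t ∈ Finset.Icc 1 T, D t ω) atTop atTop)
    (Term : Ω → ℕ)
    (hTerm : ∀ ω, Term ω = sInf {T : ℕ | 1 ≤ T ∧ Z ω < ∑ t ∈ Finset.Icc 1 T, D t ω}) :
    H - Dmax - 1 ≤ ∫ ω, (∑ t ∈ Finset.Icc 1 (Term ω), D t ω) ∂Pr ∧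
      ∫ ω, (∑ t ∈ Finset.Icc 1 (Term ω), D t ω) ∂Pr ≤ H + Dmax := by
  obtain ⟨hmean_ge, hmean_le⟩ := hlam ▸ inv_neg_log_one_sub_one_div_mem_Icc hH
  have hlam_pos : 0 < lam := inv_pos.1 (by linarith)
  have hZint : Integrable Z Pr := (integrable_map_measure aestronglyMeasurable_id
    hZmeas.aemeasurable).1 (hZ ▸ integrable_id_expMeasure hlam_pos)
  have hZmean : ∫ ω, Z ω ∂Pr = lam⁻¹ :=
    (HasLaw.integral_eq ⟨hZmeas.aemeasurable, hZ⟩).trans (integral_id_expMeasure hlam_pos)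
  have hZnonneg : ∀ᵐ ω ∂Pr, 0 ≤ Z ω :=
    ae_of_ae_map hZmeas.aemeasurable (hZ ▸ ae_nonneg_expMeasure lam)
  have hDle : ∀ᵐ ω ∂Pr, ∀ t, 1 ≤ t → D t ω ≤ Dmax :=
    (ae_ball_iff (to_countable _)).2 fun t ht => (hDbdd t ht).mono fun _ h => h.2
  have hsum_meas : ∀ T, Measurable fun ω => ∑ t ∈ Finset.Icc 1 T, D t ω :=
    fun T => Finset.measurable_sum _ fun t _ => hDmeas t
  have hTerm_meas : Measurable Term := by
    rw [funext hTerm]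
    exact measurable_sInf_setOf_nat fun n => measurableSet_setOfPred.1 <|
      (MeasurableSet.const _).inter (measurableSet_lt hZmeas (hsum_meas n))
  have hovershoot : ∀ᵐ ω ∂Pr,
      ∑ t ∈ Finset.Icc 1 (Term ω), D t ω ∈ Icc (Z ω) (Z ω + Dmax) := by
    filter_upwards [hZnonneg, hDle, hdiv] with ω hZω hDω hdivω
    have hpass := ((eventually_ge_atTop 1).and (hdivω.eventually_gt_atTop (Z ω))).exists
    obtain ⟨hlt, hle⟩ := first_passage_sum_bounds hZω hDω hpass (hTerm ω)
    exact ⟨hlt.le, hle⟩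
  obtain ⟨hlower, hupper⟩ := integral_mem_Icc_of_ae_mem_Icc hZint
    (measurable_apply_index hsum_meas hTerm_meas).aestronglyMeasurable hovershoot
  rw [hZmean] at hlower hupper
  constructor <;> linarith

/-- **Lemma 3 (Expected Horizon Lemma).** If `Z` is exponential with rate
`λ = -log (1 - 1/H)`, independent of the difficulty contributions `(D t)` (which are a.s.
bounded in `[0, Dmax]` with a.s. divergent partial sums), and `Term` is the least `T ≥ 1`
with `∑_{t=1}^T D t > Z`, then the expected total difficulty contribution up to `Term`
equals `H` up to `Dmax + 1`. -/
theorem expected_horizon_lemma {Ω : Type*} [MeasurableSpace Ω]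
    (Pr : Measure Ω) [IsProbabilityMeasure Pr]
    (H Dmax lam : ℝ) (hH : 1 < H) (hDmax : 1 ≤ Dmax)
    (hlam : lam = -Real.log (1 - 1 / H))
    (Z : Ω → ℝ) (hZmeas : Measurable Z)
    (hZ : Measure.map Z Pr = expMeasure lam)
    (D : ℕ → Ω → ℝ) (hDmeas : ∀ t, Measurable (D t))
    (hDbdd : ∀ t, 1 ≤ t → ∀ᵐ ω ∂Pr, 0 ≤ D t ω ∧ D t ω ≤ Dmax)
    (hindep : Indep (MeasurableSpace.comap Z inferInstance)
      (⨆ t ∈ {t : ℕ | 1 ≤ t}, MeasurableSpace.comap (D t) inferInstance) Pr)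
    (hdiv : ∀ᵐ ω ∂Pr,
      Tendsto (fun T => ∑ t ∈ Finset.Icc 1 T, D t ω) atTop atTop)
    (Term : Ω → ℕ)
    (hTerm : ∀ ω, Term ω = sInf {T : ℕ | 1 ≤ T ∧ Z ω < ∑ t ∈ Finset.Icc 1 T, D t ω}) :
    H - Dmax - 1 ≤ ∫ ω, (∑ t ∈ Finset.Icc 1 (Term ω), D t ω) ∂Pr ∧
      ∫ ω, (∑ t ∈ Finset.Icc 1 (Term ω), D t ω) ∂Pr ≤ H + Dmax :=
  expected_horizon_lemma_general Pr H Dmax lam hH hDmax hlam Z hZmeas hZ D hDmeas hDbdd hdiv Term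
    hTerm
end

section
/- Let W be a nonnegative real random variable on a probability space, and let H > 1 and Dmax ≥ 1 be real numbers such that for every y ≥ 0 one has (1 − 1/H)^(y + Dmax) ≤ ℙ[W ≥ y] ≤ (1 − 1/H)^y. Then H − Dmax − 1 ≤ E[W] ≤ H. -/
/-!
With `r = 1 - 1/H`, the layer-cake formula `E[W] = ∫₀^∞ ℙ[W ≥ y] dy` turns the tail bounds into
`r ^ Dmax * L ≤ E[W] ≤ L`, where `L = ∫₀^∞ r ^ y dy = -1 / log r`. The elementary bounds
`1/H ≤ -log r ≤ 1/(H - 1)` give `H - 1 ≤ L ≤ H`, and Bernoulli's inequality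
`r ^ Dmax ≥ 1 - Dmax / H` costs at most `Dmax` in the lower bound.
-/

open MeasureTheory Set Real

theorem integrableOn_const_rpow_Ioi {r : ℝ} (hr0 : 0 < r) (hr1 : r < 1) (c : ℝ) :
    IntegrableOn (fun t : ℝ => r ^ t) (Ioi c) := by
  simpa only [rpow_def_of_pos hr0] using integrableOn_exp_mul_Ioi (log_neg hr0 hr1) c

theorem integral_const_rpow_Ioi {r : ℝ} (hr0 : 0 < r) (hr1 : r < 1) (c : ℝ) :
    ∫ t in Ioi c, r ^ t = -r ^ c / log r := by
  simpa only [rpow_def_of_pos hr0] using integral_exp_mul_Ioi (log_neg hr0 hr1) c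

theorem neg_one_div_log_one_sub_one_div_mem_Icc {H : ℝ} (hH : 1 < H) :
    -1 / log (1 - 1 / H) ∈ Icc (H - 1) H := by
  have hH0 : 0 < H := by linarith
  have hr0 : 0 < 1 - 1 / H := by
    rw [sub_pos, div_lt_one hH0]; exact hH
  have hlog_le : log (1 - 1 / H) ≤ -(1 / H) := by
    linarith [log_le_sub_one_of_pos hr0]
  have hle_log : -(1 / (H - 1)) ≤ log (1 - 1 / H) := by
    have hH1 : H - 1 ≠ 0 := (sub_pos.mpr hH).ne'
    have hinv : (1 - 1 / H)⁻¹ = 1 + 1 / (H - 1) := by field_simp; ring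
    linarith [one_sub_inv_le_log_of_pos hr0]
  rw [neg_div, ← div_neg]
  constructor
  · simpa only [one_div_one_div] using one_div_le_one_div_of_le
      (by linarith [one_div_pos.mpr hH0]) (neg_le.mpr hle_log)
  · simpa only [one_div_one_div] using one_div_le_one_div_of_le
      (one_div_pos.mpr hH0) (le_neg.mpr hlog_le)

section Layercake

variable {α : Type*} [MeasurableSpace α] {μ : Measure α} [IsFiniteMeasure μ] {W : α → ℝ}

theorem integrableOn_measureReal_le_of_le {f : ℝ → ℝ} (hf : IntegrableOn f (Ioi 0))
    (htail : ∀ t, 0 < t → μ.real {a | t ≤ W a} ≤ f t) :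
    IntegrableOn (fun t => μ.real {a | t ≤ W a}) (Ioi 0) := by
  have hanti : Antitone fun t : ℝ => μ.real {a | t ≤ W a} :=
    fun _ _ hst => measureReal_mono fun _ ha => hst.trans ha
  refine hf.mono' hanti.measurable.aestronglyMeasurable <|
    (ae_restrict_iff' measurableSet_Ioi).mpr <| ae_of_all _ fun t ht => ?_
  rw [Real.norm_of_nonneg measureReal_nonneg]
  exact htail t ht

theorem integrable_of_integrableOn_measureReal_le (hW0 : 0 ≤ᵐ[μ] W) (hW : AEMeasurable W μ)
    (htail : IntegrableOn (fun t => μ.real {a | t ≤ W a}) (Ioi 0)) : Integrable W μ := by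
  refine ⟨hW.aestronglyMeasurable, (hasFiniteIntegral_iff_ofReal hW0).mpr ?_⟩
  have htoReal : ∫⁻ t in Ioi 0, μ {a | t ≤ W a} =
      ∫⁻ t in Ioi 0, ENNReal.ofReal (μ.real {a | t ≤ W a}) :=
    setLIntegral_congr_fun measurableSet_Ioi fun t _ =>
      (ENNReal.ofReal_toReal (measure_ne_top _ _)).symm
  rw [lintegral_eq_lintegral_meas_le μ hW0 hW, htoReal]
  exact htail.lintegral_lt_top

theorem integral_mem_Icc_of_measureReal_le_mem_Icc (hW0 : 0 ≤ᵐ[μ] W) (hW : AEMeasurable W μ)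
    {g f : ℝ → ℝ} (hg : IntegrableOn g (Ioi 0)) (hf : IntegrableOn f (Ioi 0))
    (htail : ∀ t, 0 < t → μ.real {a | t ≤ W a} ∈ Icc (g t) (f t)) :
    ∫ a, W a ∂μ ∈ Icc (∫ t in Ioi 0, g t) (∫ t in Ioi 0, f t) := by
  have hT := integrableOn_measureReal_le_of_le hf fun t ht => (htail t ht).2
  rw [(integrable_of_integrableOn_measureReal_le hW0 hW hT).integral_eq_integral_meas_le hW0]
  exact ⟨setIntegral_mono_on hg hT measurableSet_Ioi fun t ht => (htail t ht).1,
    setIntegral_mono_on hT hf measurableSet_Ioi fun t ht => (htail t ht).2⟩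

end Layercake

/-- Layer-cake step of the Expected Horizon Lemma: geometric tail bounds sandwich the
expectation between `H - Dmax - 1` and `H`. -/
theorem expectation_of_geometric_tails {Ω : Type*} [MeasurableSpace Ω]
    (Pr : Measure Ω) [IsProbabilityMeasure Pr]
    (W : Ω → ℝ) (hWmeas : Measurable W) (hW0 : ∀ ω, 0 ≤ W ω)
    (H Dmax : ℝ) (hH : 1 < H) (hDmax : 1 ≤ Dmax)
    (htail : ∀ y : ℝ, 0 ≤ y →
      (1 - 1 / H) ^ (y + Dmax) ≤ (Pr {ω | y ≤ W ω}).toReal ∧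
        (Pr {ω | y ≤ W ω}).toReal ≤ (1 - 1 / H) ^ y) :
    H - Dmax - 1 ≤ ∫ ω, W ω ∂Pr ∧ ∫ ω, W ω ∂Pr ≤ H := by
  obtain ⟨hL_ge, hL_le⟩ := neg_one_div_log_one_sub_one_div_mem_Icc hH
  set r := 1 - 1 / H
  have hH0 : 0 < H := by linarith
  have hinvH : 1 / H < 1 := (div_lt_one hH0).mpr hH
  have hr0 : 0 < r := sub_pos.mpr hinvH
  have hr1 : r < 1 := by linarith [one_div_pos.mpr hH0]
  have hr := integrableOn_const_rpow_Ioi hr0 hr1 0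
  obtain ⟨hlower, hupper⟩ := integral_mem_Icc_of_measureReal_le_mem_Icc (ae_of_all _ hW0)
    hWmeas.aemeasurable (hr.const_mul (r ^ Dmax)) hr fun t ht => by
      rw [← rpow_add hr0, add_comm]; exact htail t ht.le
  rw [integral_const_mul] at hlower
  rw [integral_const_rpow_Ioi hr0 hr1, rpow_zero] at hlower hupper
  have hbernoulli : 1 - Dmax / H ≤ r ^ Dmax := by
    calc 1 - Dmax / H = 1 + Dmax * -(1 / H) := by ring
      _ ≤ r ^ Dmax := one_add_mul_self_le_rpow_one_add (by linarith) hDmax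
  have hDmax_mul : Dmax * (-1 / log r / H) ≤ Dmax :=
    mul_le_of_le_one_right (by linarith) ((div_le_one hH0).mpr hL_le)
  refine ⟨?_, hupper.trans hL_le⟩
  calc H - Dmax - 1 ≤ -1 / log r - Dmax * (-1 / log r / H) := by linarith
    _ = (1 - Dmax / H) * (-1 / log r) := by ring
    _ ≤ r ^ Dmax * (-1 / log r) := mul_le_mul_of_nonneg_right hbernoulli (by linarith)
    _ ≤ ∫ ω, W ω ∂Pr := hlower
end

section
/- Let (Ω, ℱ, ℙ) be a probability space, H > 1 and Dmax ≥ 1 real numbers, and λ = −log(1 − 1/H). Let Z : Ω → ℝ be exponentially distributed with rate λ, let (D_t)_{t ≥ 1} be real random variables with 0 ≤ D_t ≤ Dmax almost surely, such that Z is independent of the σ-algebra generated by (D_t)_{t ≥ 1}, and assume Σ_{t=1}^T D_t → ∞ almost surely. Define Term(ω) as the least T ≥ 1 with Σ_{t=1}^T D_t(ω) > Z(ω). Then for every y ≥ 0: (1 − 1/H)^(y + Dmax) < ℙ[Σ_{t=1}^{Term − 1} D_t ≥ y] ≤ (1 − 1/H)^y. -/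
/-! Because the partial sums `S_n = D_1 + ⋯ + D_n` are nondecreasing, `S_{Term-1} ≥ y` holds
exactly when some `S_n` lies in `[y, Z]`. This forces `Z ≥ y`, whence the upper bound
`ℙ[Z ≥ y] = (1 - 1/H)^y`. Since the increments are at most `Dmax`, some `S_n` lands in
`[y, y + Dmax)`, hence, with positive probability, already in `[y, c)` for some `c < y + Dmax`.
The event therefore contains both `{Z > y + Dmax}` and the `σ(D)`-event `{∃ n, S_n ∈ [y, c)}`
intersected with `{c < Z ≤ y + Dmax}`; by independence the latter has positive probability,
which makes the lower bound strict. -/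

open Filter MeasureTheory ProbabilityTheory

open Set Real

lemma exists_mem_Ico_of_succ_le_add {s : ℕ → ℝ} {y d : ℝ} (h0 : s 0 < y + d)
    (hstep : ∀ n, s (n + 1) ≤ s n + d) {N : ℕ} (hN : y ≤ s N) : ∃ n, s n ∈ Ico y (y + d) := by
  induction N with
  | zero => exact ⟨0, hN, h0⟩
  | succ N ih =>
    by_cases hyN : y ≤ s N
    · exact ih hyN
    · exact ⟨N + 1, hN, by linarith [hstep N]⟩

lemma Monotone.le_apply_sInf_sub_one_iff {s : ℕ → ℝ} (hs : Monotone s) {y z : ℝ}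
    (h0 : s 0 ≤ z) (hz : ∃ n, z < s n) :
    y ≤ s (sInf {n | 1 ≤ n ∧ z < s n} - 1) ↔ ∃ n, s n ∈ Icc y z := by
  have hset : {n | 1 ≤ n ∧ z < s n} = {n | z < s n} := by
    ext n
    refine ⟨And.right, fun hn => ⟨Nat.one_le_iff_ne_zero.2 ?_, hn⟩⟩
    rintro rfl
    exact hn.not_ge h0
  have hmem : z < s (sInf {n | z < s n}) := Nat.sInf_mem hz
  have hlt_iff : ∀ n, n < sInf {n | z < s n} ↔ s n ≤ z := fun n =>
    ⟨fun h => not_lt.1 (Nat.notMem_of_lt_sInf h),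
      fun h => not_le.1 fun h' => (hmem.trans_le (hs h')).not_ge h⟩
  rw [hset]
  constructor
  · exact fun hy => ⟨_, hy, (hlt_iff _).1 (Nat.sub_one_lt_of_lt ((hlt_iff 0).2 h0))⟩
  · rintro ⟨n, hyn, hnz⟩
    exact hyn.trans (hs (Nat.le_sub_one_of_lt ((hlt_iff n).2 hnz)))

section PartialSums

variable {d : ℕ → ℝ}

lemma monotone_sum_Icc_one (hd : ∀ t, 1 ≤ t → 0 ≤ d t) :
    Monotone fun T => ∑ t ∈ Finset.Icc 1 T, d t := fun _ _ h =>
  Finset.sum_le_sum_of_subset_of_nonneg (Finset.Icc_subset_Icc_right h)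
    fun t ht _ => hd t (Finset.mem_Icc.1 ht).1

lemma exists_sum_Icc_one_mem_Ico {y δ : ℝ} (hyδ : 0 < y + δ)
    (hd : ∀ t, 1 ≤ t → d t ≤ δ)
    (hdiv : Tendsto (fun T => ∑ t ∈ Finset.Icc 1 T, d t) atTop atTop) :
    ∃ n, ∑ t ∈ Finset.Icc 1 n, d t ∈ Ico y (y + δ) := by
  obtain ⟨N, hN⟩ := (hdiv.eventually_ge_atTop y).exists
  refine exists_mem_Ico_of_succ_le_add (by simpa using hyδ) (fun n => ?_) hN
  rw [Finset.sum_Icc_succ_top (Nat.le_add_left 1 n)]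
  exact add_le_add_right (hd (n + 1) (Nat.le_add_left 1 n)) _

lemma measurable_sum_Icc_one_iSup_comap {Ω : Type*} (D : ℕ → Ω → ℝ) (n : ℕ) :
    Measurable[⨆ t ∈ {t : ℕ | 1 ≤ t}, MeasurableSpace.comap (D t) inferInstance]
      fun ω => ∑ t ∈ Finset.Icc 1 n, D t ω :=
  Finset.measurable_sum _ fun t ht => Measurable.of_comap_le (le_iSup₂
    (f := fun t (_ : t ∈ {t : ℕ | 1 ≤ t}) => MeasurableSpace.comap (D t) _) t
    (Finset.mem_Icc.1 ht).1)

end PartialSums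

namespace ProbabilityTheory

instance nullSingletonClass_expMeasure (r : ℝ) : NullSingletonClass (expMeasure r) := by
  unfold expMeasure gammaMeasure; infer_instance

variable {r : ℝ}

lemma expMeasure_Ioi (hr : 0 < r) {x : ℝ} (hx : 0 ≤ x) :
    expMeasure r (Ioi x) = ENNReal.ofReal (exp (-(r * x))) := by
  have := isProbabilityMeasure_expMeasure hr
  have hle : exp (-(r * x)) ≤ 1 := exp_le_one_iff.2 (by nlinarith)
  rw [← compl_Iic, prob_compl_eq_one_sub measurableSet_Iic, ← ofReal_cdf, cdf_expMeasure_eq hr,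
    if_pos hx, ← ENNReal.ofReal_one, ← ENNReal.ofReal_sub _ (sub_nonneg.2 hle), sub_sub_cancel]

lemma expMeasure_Ici (hr : 0 < r) {x : ℝ} (hx : 0 ≤ x) :
    expMeasure r (Ici x) = ENNReal.ofReal (exp (-(r * x))) := by
  rw [← measure_congr Ioi_ae_eq_Ici, expMeasure_Ioi hr hx]

lemma expMeasure_Ioc_ne_zero (hr : 0 < r) {a b : ℝ} (ha : 0 ≤ a) (hab : a < b) :
    expMeasure r (Ioc a b) ≠ 0 := by
  intro h
  have hsplit := measure_union (μ := expMeasure r) (Ioc_disjoint_Ioi_same (a := a) (b := b))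
    measurableSet_Ioi
  rw [Ioc_union_Ioi_eq_Ioi hab.le, h, zero_add, expMeasure_Ioi hr ha,
    expMeasure_Ioi hr (ha.trans hab.le), ENNReal.ofReal_eq_ofReal_iff (exp_nonneg _)
    (exp_nonneg _), exp_eq_exp, neg_inj] at hsplit
  exact hab.ne (mul_left_cancel₀ hr.ne' hsplit)

lemma ae_nonneg_expMeasure (hr : 0 < r) : ∀ᵐ x ∂expMeasure r, 0 ≤ x := by
  have := isProbabilityMeasure_expMeasure hr
  refine (ae_iff_measure_eq measurableSet_Ici.nullMeasurableSet).2 ?_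
  change expMeasure r (Ici 0) = _
  rw [expMeasure_Ici hr le_rfl, mul_zero, neg_zero, exp_zero, ENNReal.ofReal_one, measure_univ]

variable {Ω : Type*} {m mΩ : MeasurableSpace Ω} {μ : Measure Ω} {Z : Ω → ℝ}

lemma ofReal_exp_lt_measure_of_indep (hr : 0 < r) (hZ : Measurable Z)
    (hlaw : μ.map Z = expMeasure r) (hind : Indep (MeasurableSpace.comap Z inferInstance) m μ)
    {E : Set Ω} (hE : MeasurableSet[m] E) (hE0 : μ E ≠ 0) {a b : ℝ} (ha : 0 ≤ a) (hab : a < b) :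
    ENNReal.ofReal (exp (-(r * b))) < μ (Z ⁻¹' Ioi b ∪ (Z ⁻¹' Ioc a b ∩ E)) := by
  have hlaw' : ∀ s, MeasurableSet s → μ (Z ⁻¹' s) = expMeasure r s := fun s hs => by
    rw [← Measure.map_apply hZ hs, hlaw]
  have hdisj : Disjoint (Z ⁻¹' Ioi b) (Z ⁻¹' Ioc a b ∩ E) :=
    (Ioc_disjoint_Ioi_same.symm.preimage Z).mono_right inter_subset_left
  rw [measure_union' hdisj (hZ measurableSet_Ioi),
    (Indep_iff _ _ μ).1 hind _ _ ⟨_, measurableSet_Ioc, rfl⟩ hE, hlaw' _ measurableSet_Ioi,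
    hlaw' _ measurableSet_Ioc, expMeasure_Ioi hr (ha.trans hab.le)]
  exact ENNReal.lt_add_right ENNReal.ofReal_ne_top
    (mul_ne_zero (expMeasure_Ioc_ne_zero hr ha hab) hE0)

lemma ofReal_exp_lt_measure_exists_mem_Icc [IsProbabilityMeasure μ] (hr : 0 < r)
    (hZ : Measurable Z) (hlaw : μ.map Z = expMeasure r)
    (hind : Indep (MeasurableSpace.comap Z inferInstance) m μ)
    {S : ℕ → Ω → ℝ} (hS : ∀ n, Measurable[m] (S n)) {y b : ℝ} (hy : 0 ≤ y)
    (hpass : ∀ᵐ ω ∂μ, ∃ n, S n ω ∈ Ico y b) :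
    ENNReal.ofReal (exp (-(r * b))) < μ {ω | ∃ n, S n ω ∈ Icc y (Z ω)} := by
  set E : ℝ → Set Ω := fun c => {ω | ∃ n, S n ω ∈ Ico y c} with hE_def
  have hE : ∀ c, MeasurableSet[m] (E c) := fun c => by
    simp only [hE_def, ofPred_exists]
    exact .iUnion fun n => hS n measurableSet_Ico
  -- `E b` has full measure and is the increasing union of the `E (b - 1 / (k + 1))`.
  obtain ⟨k, hk⟩ : ∃ k : ℕ, μ (E (b - 1 / (k + 1))) ≠ 0 := by
    by_contra! hnull
    have : ∀ᵐ ω ∂μ, ∀ k : ℕ, ω ∉ E (b - 1 / (k + 1)) :=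
      ae_all_iff.2 fun k => measure_eq_zero_iff_ae_notMem.1 (hnull k)
    obtain ⟨ω, hω, n, hn⟩ := (this.and hpass).exists
    obtain ⟨k, hk⟩ := exists_nat_one_div_lt (sub_pos.2 hn.2)
    exact hω k ⟨n, hn.1, by linarith⟩
  obtain ⟨_, n, hn⟩ := nonempty_of_measure_ne_zero hk
  refine (ofReal_exp_lt_measure_of_indep hr hZ hlaw hind (hE (b - 1 / (k + 1))) hk
    (hy.trans (hn.1.trans_lt hn.2).le) (sub_lt_self b (by positivity))).trans_le
    (measure_mono_ae ?_)
  filter_upwards [hpass] with ω hω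
  obtain ⟨n, hn⟩ := hω
  rintro (hbZ | ⟨haZ, n', hn'⟩)
  · exact ⟨n, hn.1, hn.2.le.trans (le_of_lt hbZ)⟩
  · exact ⟨n', hn'.1, hn'.2.le.trans haZ.1.le⟩

end ProbabilityTheory

theorem pre_termination_tail_bounds_general {Ω : Type*} [MeasurableSpace Ω]
    (Pr : Measure Ω) [IsProbabilityMeasure Pr]
    (H Dmax lam : ℝ) (hH : 1 < H) (hDmax : 1 ≤ Dmax)
    (hlam : lam = -Real.log (1 - 1 / H))
    (Z : Ω → ℝ) (hZmeas : Measurable Z)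
    (hZ : Measure.map Z Pr = expMeasure lam)
    (D : ℕ → Ω → ℝ)
    (hDbdd : ∀ t, 1 ≤ t → ∀ᵐ ω ∂Pr, 0 ≤ D t ω ∧ D t ω ≤ Dmax)
    (hindep : Indep (MeasurableSpace.comap Z inferInstance)
      (⨆ t ∈ {t : ℕ | 1 ≤ t}, MeasurableSpace.comap (D t) inferInstance) Pr)
    (hdiv : ∀ᵐ ω ∂Pr,
      Tendsto (fun T => ∑ t ∈ Finset.Icc 1 T, D t ω) atTop atTop)
    (Term : Ω → ℕ)
    (hTerm : ∀ ω, Term ω = sInf {T : ℕ | 1 ≤ T ∧ Z ω < ∑ t ∈ Finset.Icc 1 T, D t ω}) :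
    ∀ y : ℝ, 0 ≤ y →
      (1 - 1 / H) ^ (y + Dmax) <
          (Pr {ω | y ≤ ∑ t ∈ Finset.Icc 1 (Term ω - 1), D t ω}).toReal ∧
        (Pr {ω | y ≤ ∑ t ∈ Finset.Icc 1 (Term ω - 1), D t ω}).toReal ≤ (1 - 1 / H) ^ y := by
  intro y hy
  have hq0 : 0 < 1 - 1 / H := by rw [sub_pos, div_lt_one (by linarith)]; exact hH
  have hlam0 : 0 < lam := hlam ▸ neg_pos.2 (log_neg hq0 (sub_lt_self 1 (by positivity)))
  have hpow : ∀ x : ℝ, (1 - 1 / H) ^ x = exp (-(lam * x)) := fun x => by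
    rw [rpow_def_of_pos hq0, hlam]; ring_nf
  have hDae : ∀ᵐ ω ∂Pr, ∀ t, 1 ≤ t → 0 ≤ D t ω ∧ D t ω ≤ Dmax :=
    ae_all_iff.2 fun t => ae_all_iff.2 (hDbdd t)
  have hA : {ω | y ≤ ∑ t ∈ Finset.Icc 1 (Term ω - 1), D t ω}
      =ᵐ[Pr] {ω | ∃ n, ∑ t ∈ Finset.Icc 1 n, D t ω ∈ Icc y (Z ω)} := by
    refine eventuallyEq_set.2 ?_
    filter_upwards [ae_of_ae_map hZmeas.aemeasurable (hZ ▸ ae_nonneg_expMeasure hlam0), hDae,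
      hdiv] with ω hZω hDω hdivω
    rw [hTerm]
    exact ((monotone_sum_Icc_one fun t ht => (hDω t ht).1).le_apply_sInf_sub_one_iff
      (by simpa using hZω) (hdivω.eventually_gt_atTop _).exists)
  rw [measure_congr hA, hpow, hpow, ← ENNReal.toReal_ofReal (exp_nonneg _),
    ← ENNReal.toReal_ofReal (exp_nonneg (-(lam * y)))]
  constructor
  · refine ENNReal.toReal_strict_mono (measure_ne_top _ _)
      (ofReal_exp_lt_measure_exists_mem_Icc hlam0 hZmeas hZ hindep
        (measurable_sum_Icc_one_iSup_comap D) hy ?_)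
    filter_upwards [hDae, hdiv] with ω hDω hdivω
    exact exists_sum_Icc_one_mem_Ico (by linarith) (fun t ht => (hDω t ht).2) hdivω
  · refine ENNReal.toReal_mono ENNReal.ofReal_ne_top ?_
    calc Pr {ω | ∃ n, ∑ t ∈ Finset.Icc 1 n, D t ω ∈ Icc y (Z ω)} ≤ Pr (Z ⁻¹' Ici y) :=
          measure_mono fun ω ⟨_, hn⟩ => hn.1.trans hn.2
      _ = _ := by rw [← Measure.map_apply hZmeas measurableSet_Ici, hZ, expMeasure_Ici hlam0 hy]

/-- Tail-bound step (inequalities (7) and (8)) in the proof of the Expected Horizon Lemma: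
the difficulty accumulated strictly before the termination step has tails sandwiched
between `(1 - 1/H) ^ (y + Dmax)` (strictly) and `(1 - 1/H) ^ y`. -/
theorem pre_termination_tail_bounds {Ω : Type*} [MeasurableSpace Ω]
    (Pr : Measure Ω) [IsProbabilityMeasure Pr]
    (H Dmax lam : ℝ) (hH : 1 < H) (hDmax : 1 ≤ Dmax)
    (hlam : lam = -Real.log (1 - 1 / H))
    (Z : Ω → ℝ) (hZmeas : Measurable Z)
    (hZ : Measure.map Z Pr = expMeasure lam)
    (D : ℕ → Ω → ℝ) (hDmeas : ∀ t, Measurable (D t))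
    (hDbdd : ∀ t, 1 ≤ t → ∀ᵐ ω ∂Pr, 0 ≤ D t ω ∧ D t ω ≤ Dmax)
    (hindep : Indep (MeasurableSpace.comap Z inferInstance)
      (⨆ t ∈ {t : ℕ | 1 ≤ t}, MeasurableSpace.comap (D t) inferInstance) Pr)
    (hdiv : ∀ᵐ ω ∂Pr,
      Tendsto (fun T => ∑ t ∈ Finset.Icc 1 T, D t ω) atTop atTop)
    (Term : Ω → ℕ)
    (hTerm : ∀ ω, Term ω = sInf {T : ℕ | 1 ≤ T ∧ Z ω < ∑ t ∈ Finset.Icc 1 T, D t ω}) :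
    ∀ y : ℝ, 0 ≤ y →
      (1 - 1 / H) ^ (y + Dmax) <
          (Pr {ω | y ≤ ∑ t ∈ Finset.Icc 1 (Term ω - 1), D t ω}).toReal ∧
        (Pr {ω | y ≤ ∑ t ∈ Finset.Icc 1 (Term ω - 1), D t ω}).toReal ≤ (1 - 1 / H) ^ y :=
  pre_termination_tail_bounds_general Pr H Dmax lam hH hDmax hlam Z hZmeas hZ D hDbdd hindep hdiv
    Term hTerm
end

section
/- For all real numbers H > 1 and Dmax ≥ 1: −(1 − 1/H)^Dmax / log(1 − 1/H) ≥ H − Dmax − 1. -/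
/-!
Write `q = 1 - 1/H ∈ (0, 1)`. From `log x ≤ x - 1` at `x = q⁻¹` we get
`-log q ≤ (1 - q)/q = 1/(H - 1)`, so the left-hand side is at least `q ^ Dmax * (H - 1)`.
Bernoulli's inequality `q ^ Dmax ≥ 1 - Dmax/H` then leaves
`(1 - Dmax/H)(H - 1) = H - Dmax - 1 + Dmax/H ≥ H - Dmax - 1`.
-/

namespace Real

lemma neg_log_le_one_sub_div {q : ℝ} (hq : 0 < q) : -log q ≤ (1 - q) / q := by
  calc -log q = log q⁻¹ := (log_inv q).symm
    _ ≤ q⁻¹ - 1 := log_le_sub_one_of_pos (inv_pos.mpr hq)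
    _ = (1 - q) / q := by field_simp

lemma div_one_sub_le_inv_neg_log {q : ℝ} (hq₀ : 0 < q) (hq₁ : q < 1) :
    q / (1 - q) ≤ (-log q)⁻¹ := by
  have hlog : 0 < -log q := neg_pos.mpr (log_neg hq₀ hq₁)
  calc q / (1 - q) = ((1 - q) / q)⁻¹ := (inv_div _ _).symm
    _ ≤ (-log q)⁻¹ := inv_anti₀ hlog (neg_log_le_one_sub_div hq₀)

end Real

lemma one_sub_mul_le_rpow_one_sub {x p : ℝ} (hx : x ≤ 1) (hp : 1 ≤ p) :
    1 - p * x ≤ (1 - x) ^ p := by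
  simpa only [mul_neg, ← sub_eq_add_neg] using
    one_add_mul_self_le_rpow_one_add (s := -x) (by linarith) hp

/-- Inequality (10) in the proof of the Expected Horizon Lemma: integrating the lower
geometric tail gives `-(1 - 1/H) ^ Dmax / log (1 - 1/H)`, which is at least
`H - Dmax - 1`. -/
theorem lower_geometric_tail_integral_bound (H Dmax : ℝ) (hH : 1 < H) (hDmax : 1 ≤ Dmax) :
    -(1 - 1 / H) ^ Dmax / Real.log (1 - 1 / H) ≥ H - Dmax - 1 := by
  have hH₀ : 0 < H := by linarith
  set q : ℝ := 1 - 1 / H with hq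
  have hq₀ : 0 < q := by rw [hq, sub_pos, div_lt_one hH₀]; exact hH
  have hq₁ : q < 1 := by rw [hq]; linarith [one_div_pos.mpr hH₀]
  have hratio : q / (1 - q) = H - 1 := by rw [hq]; field_simp; ring
  have hbernoulli : 1 - Dmax / H ≤ q ^ Dmax := by
    simpa only [mul_one_div] using
      one_sub_mul_le_rpow_one_sub (x := 1 / H) (by linarith) hDmax
  calc H - Dmax - 1 ≤ (1 - Dmax / H) * (H - 1) := by
        have : (1 - Dmax / H) * (H - 1) = H - Dmax - 1 + Dmax / H := by field_simp; ring
        rw [this]; linarith [div_nonneg (by linarith : (0 : ℝ) ≤ Dmax) hH₀.le]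
    _ ≤ q ^ Dmax * (q / (1 - q)) := by
        rw [hratio]; exact mul_le_mul_of_nonneg_right hbernoulli (by linarith)
    _ ≤ q ^ Dmax * (-Real.log q)⁻¹ :=
        mul_le_mul_of_nonneg_left (Real.div_one_sub_le_inv_neg_log hq₀ hq₁) (by positivity)
    _ = -q ^ Dmax / Real.log q := by rw [inv_neg, mul_neg, ← div_eq_mul_inv, neg_div]
end

section
/- Let S be a finite nonempty type, P : S → S → ℝ a row-stochastic irreducible matrix with stationary distribution μ, D : S → S → ℝ with 0 ≤ D i j ≤ Dmax (Dmax ≥ 1), and assume there exist i₀, j₀ with P i₀ j₀ > 0 and D i₀ j₀ > 0. Then there exist constants C > 0 and H₀ > 1 such that for every real H ≥ H₀ and every stationary distribution μ'_H of the probabilistic-termination matrix P'_H on Option S: max_{i ∈ S} |μ i − μ'_H (some i)| ≤ C / H and μ'_H none ≤ C / H. -/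
open Finset Filter MeasureTheory ProbabilityTheory

/-- A stationary distribution of a matrix `Q`. -/
def IsStationaryDistrib {T : Type*} [Fintype T] (Q : T → T → ℝ) (ν : T → ℝ) : Prop :=
  (∀ i, 0 ≤ ν i) ∧ (∑ i, ν i = 1) ∧ ∀ j, ∑ i, ν i * Q i j = ν j

/-!
Write `ν = μ'_H ∘ some` and `ε = μ'_H none`. Every transition of `P'_H` terminates with
probability `1 - (1 - 1/H)^D ≤ Dmax / H` (Bernoulli's inequality), so `ε ≤ Dmax / H` and `ν` is
stationary for `P` up to a defect `ν - ν P` of sup norm at most `Dmax / H`. Irreducibility makes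
`x ↦ x - x P` injective on vectors of total mass zero, so on that finite-dimensional subspace it
has a bounded inverse, `‖x‖ ≤ K ‖x - x P‖`. Applied to `ν - (1 - ε) μ` this gives
`|μ i - ν i| ≤ (K + 1) Dmax / H`.
-/

open Matrix

lemma one_sub_one_sub_rpow_mem_Icc {t d M : ℝ} (ht0 : 0 ≤ t) (ht1 : t ≤ 1) (hd0 : 0 ≤ d)
    (hdM : d ≤ M) (hM : 1 ≤ M) : 1 - (1 - t) ^ d ∈ Set.Icc 0 (M * t) := by
  refine ⟨sub_nonneg.2 (Real.rpow_le_one (by linarith) (by linarith) hd0), ?_⟩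
  have hbernoulli : 1 - M * t ≤ (1 - t) ^ M := by
    simpa [sub_eq_add_neg] using one_add_mul_self_le_rpow_one_add (by linarith : -1 ≤ -t) hM
  have := Real.rpow_le_rpow_of_exponent_ge' (x := 1 - t) (by linarith) (by linarith) hd0 hdM
  linarith

lemma Finset.sum_mul_le_of_sum_le_one {ι : Type*} {s : Finset ι} {w f : ι → ℝ} {c : ℝ}
    (hw0 : ∀ i ∈ s, 0 ≤ w i) (hw : ∑ i ∈ s, w i ≤ 1) (hc : 0 ≤ c) (hf : ∀ i ∈ s, f i ≤ c) :
    ∑ i ∈ s, w i * f i ≤ c :=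
  calc ∑ i ∈ s, w i * f i ≤ ∑ i ∈ s, w i * c :=
        Finset.sum_le_sum fun i hi => mul_le_mul_of_nonneg_left (hf i hi) (hw0 i hi)
    _ = (∑ i ∈ s, w i) * c := (Finset.sum_mul ..).symm
    _ ≤ c := mul_le_of_le_one_left hc hw

lemma Matrix.vecMul_pow_eq_self_s10 {n : Type*} [Fintype n] [DecidableEq n] {M : Matrix n n ℝ}
    {x : n → ℝ} (hx : x ᵥ* M = x) (k : ℕ) : x ᵥ* M ^ k = x := by
  induction k with
  | zero => simp
  | succ k ih => rw [pow_succ, ← vecMul_vecMul, ih, hx]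

namespace RowStochastic

variable {S : Type*} [Fintype S] {P : S → S → ℝ}

lemma le_one (hP : RowStochastic P) (i j : S) : P i j ≤ 1 := by
  simpa [hP.2 i] using Finset.single_le_sum (fun k _ => hP.1 i k) (Finset.mem_univ j)

lemma sum_vecMul (hP : RowStochastic P) (x : S → ℝ) : ∑ j, (x ᵥ* of P) j = ∑ i, x i := by
  simp only [vecMul, dotProduct, of_apply]
  rw [Finset.sum_comm]
  simp [← Finset.mul_sum, hP.2]

lemma pow_apply_nonneg [DecidableEq S] (hP : RowStochastic P) (k : ℕ) (i j : S) :
    0 ≤ (of P ^ k) i j := by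
  induction k generalizing j with
  | zero => rw [pow_zero, one_apply]; split_ifs <;> norm_num
  | succ k ih =>
    rw [pow_succ, mul_apply]
    exact Finset.sum_nonneg fun l _ => mul_nonneg (ih l) (hP.1 l j)

lemma abs_vecMul_eq_abs (hP : RowStochastic P) {x : S → ℝ} (hx : x ᵥ* of P = x) :
    |x| ᵥ* of P = |x| := by
  have hle : ∀ j, |x j| ≤ (|x| ᵥ* of P) j := fun j =>
    calc |x j| = |∑ i, x i * P i j| := by rw [← congrFun hx j]; rfl
      _ ≤ ∑ i, |x i * P i j| := Finset.abs_sum_le_sum_abs _ _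
      _ = (|x| ᵥ* of P) j := by simp [vecMul, dotProduct, abs_mul, abs_of_nonneg (hP.1 _ j)]
  have hsum : ∑ j, |x j| = ∑ j, (|x| ᵥ* of P) j := by rw [hP.sum_vecMul]; rfl
  funext j
  exact ((Finset.sum_eq_sum_iff_of_le fun j _ => hle j).1 hsum j (Finset.mem_univ j)).symm

variable [DecidableEq S]

lemma pos_of_vecMul_eq_self (hP : RowStochastic P) (hirr : MatIrreducible P) {y : S → ℝ}
    (hy0 : 0 ≤ y) (hy : y ᵥ* of P = y) {i : S} (hi : 0 < y i) (j : S) : 0 < y j := by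
  obtain ⟨k, -, hk⟩ := hirr i j
  calc 0 < y i * (of P ^ k) i j := mul_pos hi hk
    _ ≤ ∑ l, y l * (of P ^ k) l j :=
      Finset.single_le_sum (f := fun l => y l * (of P ^ k) l j)
        (fun l _ => mul_nonneg (hy0 l) (hP.pow_apply_nonneg k l j)) (Finset.mem_univ i)
    _ = y j := congrFun (vecMul_pow_eq_self_s10 hy k) j

lemma eq_zero_of_vecMul_eq_self (hP : RowStochastic P) (hirr : MatIrreducible P)
    {x : S → ℝ} (hx : x ᵥ* of P = x) (hsum : ∑ i, x i = 0) : x = 0 := by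
  have hnonpos : ∀ i, x i ≤ 0 := by
    intro b
    by_contra! hb
    -- `x + |x| = 2 x⁺` is invariant, nonnegative and positive at `b`, hence positive everywhere.
    have hy : (x + |x|) ᵥ* of P = x + |x| := by rw [add_vecMul, hP.abs_vecMul_eq_abs hx, hx]
    have hy0 : 0 ≤ x + |x| := fun i => add_abs_nonneg (x i)
    have hpos : ∀ j, 0 < x j := fun j => by
      have := hP.pos_of_vecMul_eq_self hirr hy0 hy (i := b) (add_pos_of_pos_of_nonneg hb (abs_nonneg _)) j
      simp only [Pi.add_apply, Pi.abs_apply] at this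
      by_contra! hj
      rw [abs_of_nonpos hj] at this
      linarith
    have : 0 < ∑ i, x i := Finset.sum_pos (fun j _ => hpos j) ⟨b, Finset.mem_univ b⟩
    linarith
  funext i
  exact (Finset.sum_eq_zero_iff_of_nonpos fun j _ => hnonpos j).1 hsum i (Finset.mem_univ i)

lemma exists_norm_le_mul_norm_sub_vecMul (hP : RowStochastic P) (hirr : MatIrreducible P) :
    ∃ K : ℝ, 0 ≤ K ∧ ∀ x : S → ℝ, ∑ i, x i = 0 → ‖x‖ ≤ K * ‖x - x ᵥ* of P‖ := by
  let T : (S → ℝ) →ₗ[ℝ] (S → ℝ) × ℝ :=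
    (LinearMap.id - (of P).vecMulLinear).prod
      (LinearMap.lsum ℝ (fun _ : S => ℝ) ℝ fun _ => LinearMap.id)
  have hT : LinearMap.ker T = ⊥ := by
    rw [LinearMap.ker_eq_bot']
    intro x hx
    obtain ⟨hfix, hsum⟩ := Prod.ext_iff.1 hx
    exact hP.eq_zero_of_vecMul_eq_self hirr (sub_eq_zero.1 (hfix : x - x ᵥ* of P = 0)).symm
      (by simpa [T] using hsum)
  obtain ⟨K, -, hK⟩ := T.exists_antilipschitzWith hT
  refine ⟨K, K.2, fun x hx => ?_⟩
  calc ‖x‖ ≤ K * ‖T x‖ := ZeroHomClass.bound_of_antilipschitz T hK x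
    _ = K * ‖x - x ᵥ* of P‖ := by simp [T, hx]

end RowStochastic

namespace IsStationaryDistrib

variable {T : Type*} [Fintype T] {Q : T → T → ℝ}

lemma le_one {ν : T → ℝ} (hν : IsStationaryDistrib Q ν) (i : T) : ν i ≤ 1 := by
  simpa [hν.2.1] using Finset.single_le_sum (fun j _ => hν.1 j) (Finset.mem_univ i)

lemma apply_none_add_sum_some {ν : Option T → ℝ} {Q' : Option T → Option T → ℝ}
    (hν : IsStationaryDistrib Q' ν) : ν none + ∑ i, ν (some i) = 1 := by
  rw [← Fintype.sum_option, hν.2.1]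

lemma abs_sub_le_of_norm_sub_vecMul_le {μ ν : T → ℝ} {K c ε : ℝ} (hμ : IsStationaryDistrib Q μ)
    (hK0 : 0 ≤ K) (hK : ∀ x : T → ℝ, ∑ i, x i = 0 → ‖x‖ ≤ K * ‖x - x ᵥ* of Q‖)
    (hν : ∑ i, ν i = 1 - ε) (hε0 : 0 ≤ ε) (hεc : ε ≤ c) (hdefect : ‖ν - ν ᵥ* of Q‖ ≤ c)
    (i : T) : |μ i - ν i| ≤ (K + 1) * c := by
  set w := ν - (1 - ε) • μ
  have hw0 : ∑ i, w i = 0 := by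
    simp [w, Finset.sum_sub_distrib, ← Finset.mul_sum, hμ.2.1, hν]
  have hw : w - w ᵥ* of Q = ν - ν ᵥ* of Q := by
    simp only [w, sub_vecMul, smul_vecMul, show μ ᵥ* of Q = μ from funext hμ.2.2]
    abel
  have hwi : |w i| ≤ K * c := calc
    |w i| ≤ ‖w‖ := norm_le_pi_norm w i
    _ ≤ K * ‖w - w ᵥ* of Q‖ := hK w hw0
    _ ≤ K * c := by rw [hw]; gcongr
  have hεμ : ε * μ i ≤ ε := mul_le_of_le_one_right hε0 (hμ.le_one i)
  calc |μ i - ν i| = |ε * μ i - w i| := by congr 1; simp [w]; ring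
    _ ≤ |ε * μ i| + |w i| := abs_sub _ _
    _ ≤ c + K * c := by rw [abs_of_nonneg (mul_nonneg hε0 (hμ.1 i))]; linarith
    _ = (K + 1) * c := by ring

variable {S : Type*} [Fintype S] [DecidableEq S] {P D : S → S → ℝ} {H c : ℝ} {s₀ : S}
  {μ' : Option S → ℝ}

lemma apply_none_le_of_ptMatrix (hμ' : IsStationaryDistrib (PTMatrix P D H s₀) μ')
    (hP : RowStochastic P) (hc : 0 ≤ c) (hq : ∀ i j, 1 - (1 - 1 / H) ^ D i j ∈ Set.Icc 0 c) :
    μ' none ≤ c := by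
  have h := hμ'.2.2 none
  rw [Fintype.sum_option] at h
  simp only [PTMatrix, mul_zero, zero_add] at h
  rw [← h]
  refine Finset.sum_mul_le_of_sum_le_one (fun i _ => hμ'.1 _)
    (by linarith [hμ'.apply_none_add_sum_some, hμ'.1 none]) hc fun i _ => ?_
  simp_rw [mul_comm _ (P i _)]
  exact Finset.sum_mul_le_of_sum_le_one (fun j _ => hP.1 i j) (hP.2 i).le hc fun j _ => (hq i j).2

lemma norm_sub_vecMul_le_of_ptMatrix (hμ' : IsStationaryDistrib (PTMatrix P D H s₀) μ')
    (hP : RowStochastic P) (hc : 0 ≤ c) (hq : ∀ i j, 1 - (1 - 1 / H) ^ D i j ∈ Set.Icc 0 c) :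
    ‖μ' ∘ some - (μ' ∘ some) ᵥ* of P‖ ≤ c := by
  rw [pi_norm_le_iff_of_nonneg hc]
  intro j
  have h := hμ'.2.2 (some j)
  rw [Fintype.sum_option] at h
  simp only [PTMatrix] at h
  have hdefect : (μ' ∘ some - (μ' ∘ some) ᵥ* of P) j = μ' none * (if j = s₀ then 1 else 0)
      - ∑ i, μ' (some i) * ((1 - (1 - 1 / H) ^ D i j) * P i j) := by
    simp only [Pi.sub_apply, Function.comp_apply, ← h, vecMul, dotProduct, of_apply]
    simp only [sub_mul, mul_sub, one_mul, Finset.sum_sub_distrib]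
    ring
  rw [hdefect, Real.norm_eq_abs]
  have hite : (if j = s₀ then (1 : ℝ) else 0) ∈ Set.Icc 0 1 := by split_ifs <;> simp
  refine abs_sub_le_of_nonneg_of_le (mul_nonneg (hμ'.1 none) hite.1)
    ((mul_le_of_le_one_right (hμ'.1 none) hite.2).trans (hμ'.apply_none_le_of_ptMatrix hP hc hq))
    (Finset.sum_nonneg fun i _ => mul_nonneg (hμ'.1 _) (mul_nonneg (hq i j).1 (hP.1 i j))) ?_
  refine Finset.sum_mul_le_of_sum_le_one (fun i _ => hμ'.1 _)
    (by linarith [hμ'.apply_none_add_sum_some, hμ'.1 none]) hc fun i _ => ?_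
  exact (mul_le_of_le_one_right (hq i j).1 (hP.le_one i j)).trans (hq i j).2

end IsStationaryDistrib

theorem stationary_distribution_perturbation_general {S : Type*} [Fintype S]
    [DecidableEq S] (P D : S → S → ℝ) (μ : S → ℝ) (Dmax : ℝ) (s₀ : S)
    (hP : RowStochastic P) (hirr : MatIrreducible P) (hμ : IsStationaryDistrib P μ)
    (hD0 : ∀ i j, 0 ≤ D i j) (hD1 : ∀ i j, D i j ≤ Dmax) (hDmax : 1 ≤ Dmax) :
    ∃ C > 0, ∃ H₀ > 1, ∀ H, H₀ ≤ H → ∀ μ' : Option S → ℝ,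
      IsStationaryDistrib (PTMatrix P D H s₀) μ' →
      (∀ i, |μ i - μ' (some i)| ≤ C / H) ∧ μ' none ≤ C / H := by
  obtain ⟨K, hK0, hK⟩ := hP.exists_norm_le_mul_norm_sub_vecMul hirr
  refine ⟨(K + 1) * Dmax, by nlinarith, 2, one_lt_two, fun H hH μ' hμ' => ?_⟩
  have hc : 0 ≤ Dmax / H := div_nonneg (by linarith) (by linarith)
  have hq : ∀ i j, 1 - (1 - 1 / H) ^ D i j ∈ Set.Icc 0 (Dmax / H) := fun i j => by
    simpa [div_eq_mul_inv] using one_sub_one_sub_rpow_mem_Icc (t := 1 / H) (by positivity)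
      (by rw [div_le_one] <;> linarith) (hD0 i j) (hD1 i j) hDmax
  have hnone := hμ'.apply_none_le_of_ptMatrix hP hc hq
  have hsome := hμ.abs_sub_le_of_norm_sub_vecMul_le hK0 hK
    (eq_sub_of_add_eq' hμ'.apply_none_add_sum_some) (hμ'.1 none) hnone
    (hμ'.norm_sub_vecMul_le_of_ptMatrix hP hc hq)
  rw [mul_div_assoc]
  exact ⟨hsome, hnone.trans (le_mul_of_one_le_left hc (by linarith))⟩

/-- Stationary distribution perturbation lemma: the stationary distributions of the
original chain and of the PT chain agree up to `O(1/H)` in the sup norm, and the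
stationary mass of the terminal state is `O(1/H)`. -/
theorem stationary_distribution_perturbation {S : Type*} [Fintype S] [Nonempty S]
    [DecidableEq S] (P D : S → S → ℝ) (μ : S → ℝ) (Dmax : ℝ) (s₀ : S)
    (hP : RowStochastic P) (hirr : MatIrreducible P) (hμ : IsStationaryDistrib P μ)
    (hD0 : ∀ i j, 0 ≤ D i j) (hD1 : ∀ i j, D i j ≤ Dmax) (hDmax : 1 ≤ Dmax)
    (hpos : ∃ i₀ j₀, 0 < P i₀ j₀ ∧ 0 < D i₀ j₀) :
    ∃ C > 0, ∃ H₀ > 1, ∀ H, H₀ ≤ H → ∀ μ' : Option S → ℝ,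
      IsStationaryDistrib (PTMatrix P D H s₀) μ' →
      (∀ i, |μ i - μ' (some i)| ≤ C / H) ∧ μ' none ≤ C / H :=
  stationary_distribution_perturbation_general P D μ Dmax s₀ hP hirr hμ hD0 hD1 hDmax
end

section
/- Let S be a finite type, P : S → S → ℝ a row-stochastic matrix, R : S → S → ℝ with |R i j| ≤ Rmax, D : S → S → ℝ with 0 ≤ D i j ≤ Dmax for a real Dmax ≥ 1, and H > 1 a real number. Define R̂ i = Σ_j R i j · P i j and R̂'_H i = Σ_j R i j · (1 − 1/H)^(D i j) · P i j. Then for every i ∈ S: |R̂ i − R̂'_H i| ≤ Rmax · Dmax / H. -/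
open Finset Filter MeasureTheory ProbabilityTheory

/-- A stationary distribution of a matrix `Q`. -/
def MatIsStationary {T : Type*} [Fintype T] (Q : T → T → ℝ) (ν : T → ℝ) : Prop :=
  (∀ i, 0 ≤ ν i) ∧ (∑ i, ν i = 1) ∧ ∀ j, ∑ i, ν i * Q i j = ν j

/-! The two rewards differ by `∑ j, R i j * (1 - (1 - 1/H) ^ D i j) * P i j`, an average over the
row `P i` of terms bounded by `Rmax * (1 - (1 - 1/H) ^ Dmax)`; Bernoulli's inequality
`(1 - 1/H) ^ Dmax ≥ 1 - Dmax / H`, valid for `Dmax ≥ 1`, turns this into `Rmax * Dmax / H`. -/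

lemma one_sub_rpow_one_sub_nonneg {x d : ℝ} (hx0 : 0 ≤ x) (hx1 : x ≤ 1) (hd : 0 ≤ d) :
    0 ≤ 1 - (1 - x) ^ d :=
  sub_nonneg.mpr (Real.rpow_le_one (by linarith) (by linarith) hd)

lemma one_sub_rpow_one_sub_le_mul {x d c : ℝ} (hx0 : 0 ≤ x) (hx1 : x ≤ 1) (hd : 0 ≤ d)
    (hdc : d ≤ c) (hc : 1 ≤ c) :
    1 - (1 - x) ^ d ≤ c * x := by
  have hmono : (1 - x) ^ c ≤ (1 - x) ^ d :=
    Real.rpow_le_rpow_of_exponent_ge' (by linarith) (by linarith) hd hdc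
  have hbernoulli : 1 + c * -x ≤ (1 + -x) ^ c := one_add_mul_self_le_rpow_one_add (by linarith) hc
  rw [← sub_eq_add_neg] at hbernoulli
  linarith

lemma abs_sum_mul_le_of_abs_le {ι : Type*} (s : Finset ι) {f p : ι → ℝ} {M : ℝ}
    (hp : ∀ j ∈ s, 0 ≤ p j) (hp1 : ∑ j ∈ s, p j = 1) (hf : ∀ j ∈ s, |f j| ≤ M) :
    |∑ j ∈ s, f j * p j| ≤ M :=
  calc |∑ j ∈ s, f j * p j|
      ≤ ∑ j ∈ s, |f j * p j| := abs_sum_le_sum_abs _ _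
    _ ≤ ∑ j ∈ s, M * p j := sum_le_sum fun j hj => by
        rw [abs_mul, abs_of_nonneg (hp j hj)]
        exact mul_le_mul_of_nonneg_right (hf j hj) (hp j hj)
    _ = M := by rw [← mul_sum, hp1, mul_one]

lemma Rhat_sub_RhatPT {S : Type*} [Fintype S] (P R D : S → S → ℝ) (H : ℝ) (i : S) :
    Rhat P R i - RhatPT P R D H i = ∑ j, R i j * (1 - (1 - 1 / H) ^ D i j) * P i j := by
  rw [Rhat, RhatPT, ← sum_sub_distrib]
  exact sum_congr rfl fun j _ => by ring

/-- Lemma 13 (explicit constants): the expected one-step rewards of the original and PT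
chains agree up to `Rmax * Dmax / H` in each state. -/
theorem expected_one_step_reward_perturbation {S : Type*} [Fintype S]
    (P R D : S → S → ℝ) (Rmax Dmax H : ℝ)
    (hP : RowStochastic P) (hR : ∀ i j, |R i j| ≤ Rmax)
    (hD0 : ∀ i j, 0 ≤ D i j) (hD1 : ∀ i j, D i j ≤ Dmax)
    (hDmax : 1 ≤ Dmax) (hH : 1 < H) :
    ∀ i, |Rhat P R i - RhatPT P R D H i| ≤ Rmax * Dmax / H := by
  intro i
  have hx0 : 0 ≤ 1 / H := by positivity
  have hx1 : 1 / H ≤ 1 := (div_le_one (by linarith)).mpr hH.le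
  rw [Rhat_sub_RhatPT]
  refine abs_sum_mul_le_of_abs_le _ (fun j _ => hP.1 i j) (hP.2 i) fun j _ => ?_
  rw [abs_mul, abs_of_nonneg (one_sub_rpow_one_sub_nonneg hx0 hx1 (hD0 i j)), mul_div_assoc,
    ← mul_one_div Dmax]
  exact mul_le_mul (hR i j) (one_sub_rpow_one_sub_le_mul hx0 hx1 (hD0 i j) (hD1 i j) hDmax)
    (one_sub_rpow_one_sub_nonneg hx0 hx1 (hD0 i j)) ((abs_nonneg _).trans (hR i j))
end

section
/- Let S be a finite nonempty type, P : S → S → ℝ a row-stochastic irreducible matrix with stationary distribution μ, D : S → S → ℝ with 0 ≤ D i j ≤ Dmax (Dmax ≥ 1), and assume Σ_i D̂ i · μ i > ε for some ε > 0 and that there exist i₀, j₀ with P i₀ j₀ > 0 and D i₀ j₀ > 0. Then there exist ε' > 0 and H₀ > 1 such that for every real H ≥ H₀ and every stationary distribution μ'_H of the probabilistic-termination matrix P'_H on Option S: Σ_i D̂'_H i · μ'_H (some i) > ε'. -/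
/-!
Put `b = 1 - 1 / H` and `γ = b ^ Dmax`. On the non-terminal states `P'_H` is a substochastic
matrix `Q` with `γ • P ≤ Q` entrywise, and the restriction `x` of a stationary distribution of
`P'_H` is subinvariant, `x Q ≤ x`; hence `γ ^ k * (x ⬝ P ^ k D̂) ≤ x ⬝ Q ^ k D̂ ≤ x ⬝ D̂`.
Irreducibility gives `N` and `c > 0` with `∑_{k<N} (P ^ k) i i₀ ≥ c` for all `i`, where
`D̂ i₀ > 0`. The terminal state carries at most half of the stationary mass, because its mass is
the flow into it from the other states. Averaging over `k < N` yields
`γ ^ (N + 1) * c * D̂ i₀ ≤ 2 N ∑ D̂'_H x`, and `γ → 1` as `H → ∞`.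
-/

open Finset Filter MeasureTheory ProbabilityTheory

namespace Matrix

variable {n R : Type*} [Fintype n] [CommSemiring R] [PartialOrder R] [IsOrderedRing R]

theorem mulVec_nonneg {A : Matrix n n R} (hA : ∀ i j, 0 ≤ A i j) {u : n → R} (hu : 0 ≤ u) :
    0 ≤ A *ᵥ u :=
  fun i ↦ dotProduct_nonneg_of_nonneg (hA i) hu

theorem apply_mul_le_mulVec_apply {A : Matrix n n R} {u : n → R} (i j : n)
    (hA : ∀ k, 0 ≤ A i k) (hu : 0 ≤ u) : A i j * u j ≤ (A *ᵥ u) i :=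
  single_le_sum (f := fun k ↦ A i k * u k) (fun k _ ↦ mul_nonneg (hA k) (hu k)) (mem_univ j)

variable [DecidableEq n]

theorem pow_apply_le_pow_apply_of_le {A B : Matrix n n R} (hA : ∀ i j, 0 ≤ A i j)
    (hAB : ∀ i j, A i j ≤ B i j) (k : ℕ) (i j : n) :
    (A ^ k) i j ≤ (B ^ k) i j := by
  induction k generalizing j with
  | zero => rfl
  | succ k ih =>
    have hB k i j : 0 ≤ (B ^ k) i j :=
      pow_apply_nonneg (fun i j ↦ (hA i j).trans (hAB i j)) k i j
    simp only [pow_succ, mul_apply]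
    exact sum_le_sum fun l _ ↦ mul_le_mul (ih l) (hAB l j) (hA l j) (hB k i l)

theorem dotProduct_pow_mulVec_le_of_vecMul_le {Q : Matrix n n R} (hQ : ∀ i j, 0 ≤ Q i j)
    {x u : n → R} (hx : x ᵥ* Q ≤ x) (hu : 0 ≤ u) (k : ℕ) : x ⬝ᵥ (Q ^ k *ᵥ u) ≤ x ⬝ᵥ u := by
  induction k with
  | zero => simp
  | succ k ih =>
    calc x ⬝ᵥ (Q ^ (k + 1) *ᵥ u) = (x ᵥ* Q) ⬝ᵥ (Q ^ k *ᵥ u) := by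
          rw [pow_succ', ← mulVec_mulVec, dotProduct_mulVec]
      _ ≤ x ⬝ᵥ (Q ^ k *ᵥ u) :=
          dotProduct_le_dotProduct_of_nonneg_right hx
            (mulVec_nonneg (pow_apply_nonneg hQ k) hu)
      _ ≤ x ⬝ᵥ u := ih

theorem pow_mul_dotProduct_pow_mulVec_le {P Q : Matrix n n R} {γ : R} (hP : ∀ i j, 0 ≤ P i j)
    (hγ : 0 ≤ γ) (hPQ : ∀ i j, γ * P i j ≤ Q i j) {x u : n → R} (hx0 : 0 ≤ x)
    (hx : x ᵥ* Q ≤ x) (hu : 0 ≤ u) (k : ℕ) :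
    γ ^ k * (x ⬝ᵥ (P ^ k *ᵥ u)) ≤ x ⬝ᵥ u := by
  have hγP : ∀ i j, 0 ≤ (γ • P) i j := fun i j ↦ mul_nonneg hγ (hP i j)
  calc γ ^ k * (x ⬝ᵥ (P ^ k *ᵥ u)) = x ⬝ᵥ ((γ • P) ^ k *ᵥ u) := by
        rw [smul_pow, smul_mulVec, dotProduct_smul, smul_eq_mul]
    _ ≤ x ⬝ᵥ (Q ^ k *ᵥ u) := dotProduct_le_dotProduct_of_nonneg_left
        (fun i ↦ dotProduct_le_dotProduct_of_nonneg_right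
          (pow_apply_le_pow_apply_of_le hγP hPQ k i) hu) hx0
    _ ≤ x ⬝ᵥ u := dotProduct_pow_mulVec_le_of_vecMul_le
        (fun i j ↦ (hγP i j).trans (hPQ i j)) hx hu k

theorem pow_mul_mul_sum_le {P Q : Matrix n n R} {γ c : R} (hP : ∀ i j, 0 ≤ P i j)
    (hγ0 : 0 ≤ γ) (hγ1 : γ ≤ 1) (hPQ : ∀ i j, γ * P i j ≤ Q i j) {x u : n → R} (hx0 : 0 ≤ x)
    (hx : x ᵥ* Q ≤ x) (hu : 0 ≤ u) {N : ℕ}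
    (hc : ∀ i, c ≤ ((∑ k ∈ range N, P ^ k) *ᵥ u) i) :
    γ ^ N * (c * ∑ i, x i) ≤ N * (x ⬝ᵥ u) := by
  calc γ ^ N * (c * ∑ i, x i) ≤ γ ^ N * (x ⬝ᵥ ((∑ k ∈ range N, P ^ k) *ᵥ u)) := by
        rw [mul_sum, dotProduct]
        refine mul_le_mul_of_nonneg_left ?_ (pow_nonneg hγ0 N)
        exact sum_le_sum fun i _ ↦ by
          rw [mul_comm]; exact mul_le_mul_of_nonneg_left (hc i) (hx0 i)
    _ = ∑ k ∈ range N, γ ^ N * (x ⬝ᵥ (P ^ k *ᵥ u)) := by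
        rw [sum_mulVec, dotProduct_sum, mul_sum]
    _ ≤ ∑ k ∈ range N, x ⬝ᵥ u := sum_le_sum fun k hk ↦
        (mul_le_mul_of_nonneg_right (pow_le_pow_of_le_one hγ0 hγ1 (mem_range.1 hk).le)
          (dotProduct_nonneg_of_nonneg hx0 (mulVec_nonneg (pow_apply_nonneg hP k) hu))).trans
        (pow_mul_dotProduct_pow_mulVec_le hP hγ0 hPQ hx0 hx hu k)
    _ = N * (x ⬝ᵥ u) := by rw [sum_const, card_range, nsmul_eq_mul]

end Matrix

open Matrix Topology

theorem MatIrreducible.exists_le_sum_pow_apply {S : Type*} [Fintype S] [DecidableEq S]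
    {P : S → S → ℝ} (hP : ∀ i j, 0 ≤ P i j) (hirr : MatIrreducible P) (j : S) :
    ∃ N > 0, ∃ c > 0, ∀ i, c ≤ (∑ k ∈ range N, Matrix.of P ^ k) i j := by
  choose n hn using fun i ↦ hirr i j
  refine ⟨univ.sup n + 1, Nat.succ_pos _,
    univ.inf' ⟨j, mem_univ j⟩ fun i ↦ (Matrix.of P ^ n i) i j,
    (lt_inf'_iff _).2 fun i _ ↦ (hn i).2, fun i ↦ ?_⟩
  have hnN : n i ∈ range (univ.sup n + 1) :=
    mem_range.2 (Nat.lt_succ_of_le (le_sup (mem_univ i)))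
  calc univ.inf' _ (fun i ↦ (Matrix.of P ^ n i) i j) ≤ (Matrix.of P ^ n i) i j :=
        inf'_le _ (mem_univ i)
    _ ≤ ∑ k ∈ range (univ.sup n + 1), (Matrix.of P ^ k) i j :=
        single_le_sum (fun k _ ↦ pow_apply_nonneg hP k i j) hnN
    _ = (∑ k ∈ range (univ.sup n + 1), Matrix.of P ^ k) i j := (sum_apply i j _ _).symm

theorem IsStationaryDist.apply_le_half {T : Type*} [Fintype T] [DecidableEq T]
    {Q : T → T → ℝ} {ν : T → ℝ} (hν : IsStationaryDist Q ν) {t : T} (htt : Q t t = 0)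
    (hQ : ∀ i, Q i t ≤ 1) : ν t ≤ 1 / 2 := by
  obtain ⟨hν0, hν1, hνQ⟩ := hν
  have hflow := hνQ t
  rw [← add_sum_erase _ _ (mem_univ t), htt, mul_zero, zero_add] at hflow
  rw [← add_sum_erase _ _ (mem_univ t)] at hν1
  have hflow_le : ∑ i ∈ univ.erase t, ν i * Q i t ≤ ∑ i ∈ univ.erase t, ν i :=
    sum_le_sum fun i _ ↦ mul_le_of_le_one_right (hν0 i) (hQ i)
  linarith

theorem IsStationaryDist.vecMul_comp_some_le {T : Type*} [Fintype T]
    {Q : Option T → Option T → ℝ} {ν : Option T → ℝ} (hν : IsStationaryDist Q ν)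
    (hQ : ∀ j, 0 ≤ Q none (some j)) :
    (ν ∘ some) ᵥ* Matrix.of (fun i j ↦ Q (some i) (some j)) ≤ ν ∘ some := by
  intro j
  have h := hν.2.2 (some j)
  rw [Fintype.sum_option] at h
  have hrestart := mul_nonneg (hν.1 none) (hQ j)
  change ∑ i, ν (some i) * Q (some i) (some j) ≤ ν (some j)
  linarith

theorem PTMatrix_apply_none_le_one {S : Type*} [Fintype S] [DecidableEq S] {P D : S → S → ℝ}
    {H : ℝ} (s₀ : S) (hP : RowStochastic P) (hH : 1 ≤ H) :
    ∀ i, PTMatrix P D H s₀ i none ≤ 1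
  | none => zero_le_one
  | some i => by
    have hb : 0 ≤ 1 - 1 / H := by rw [sub_nonneg, div_le_one (by linarith)]; exact hH
    calc ∑ j, (1 - (1 - 1 / H) ^ (D i j)) * P i j ≤ ∑ j, P i j :=
          sum_le_sum fun j _ ↦ mul_le_of_le_one_left (hP.1 i j)
            (sub_le_self _ (Real.rpow_nonneg hb _))
      _ = 1 := hP.2 i

theorem IsStationaryDist.one_half_le_sum_PTMatrix {S : Type*} [Fintype S] [DecidableEq S]
    {P D : S → S → ℝ} {H : ℝ} {s₀ : S} {μ' : Option S → ℝ}
    (hμ' : IsStationaryDist (PTMatrix P D H s₀) μ') (hP : RowStochastic P) (hH : 1 ≤ H) :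
    1 / 2 ≤ ∑ i, μ' (some i) := by
  have hnone := hμ'.apply_le_half rfl (PTMatrix_apply_none_le_one s₀ hP hH)
  have htotal := hμ'.2.1
  rw [Fintype.sum_option] at htotal
  linarith

theorem rpow_mul_Dhat_le_DhatPT {S : Type*} [Fintype S] {P D : S → S → ℝ} {Dmax H : ℝ}
    (hP : ∀ i j, 0 ≤ P i j) (hD0 : ∀ i j, 0 ≤ D i j) (hD1 : ∀ i j, D i j ≤ Dmax) (hH : 1 < H)
    (i : S) : (1 - 1 / H) ^ Dmax * Dhat P D i ≤ DhatPT P D H i := by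
  have hb0 : 0 < 1 - 1 / H := sub_pos.2 ((div_lt_one (by linarith)).2 hH)
  rw [Dhat, DhatPT, mul_sum]
  refine sum_le_sum fun j _ ↦ ?_
  have hγD := Real.rpow_le_rpow_of_exponent_ge hb0 (sub_le_self _ (by positivity)) (hD1 i j)
  nlinarith [mul_le_mul_of_nonneg_left hγD (mul_nonneg (hD0 i j) (hP i j))]

theorem pow_succ_mul_le_two_mul_sum_DhatPT_mul {S : Type*} [Fintype S] [DecidableEq S]
    {P D : S → S → ℝ} {Dmax H c : ℝ} {s₀ j₀ : S} {N : ℕ} (hP : RowStochastic P)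
    (hD0 : ∀ i j, 0 ≤ D i j) (hD1 : ∀ i j, D i j ≤ Dmax) (hDmax : 0 ≤ Dmax) (hH : 1 < H)
    (hc0 : 0 ≤ c) (hc : ∀ i, c ≤ (∑ k ∈ range N, Matrix.of P ^ k) i j₀) {μ' : Option S → ℝ}
    (hμ' : IsStationaryDist (PTMatrix P D H s₀) μ') :
    ((1 - 1 / H) ^ Dmax) ^ (N + 1) * (c * Dhat P D j₀) ≤
      2 * N * ∑ i, DhatPT P D H i * μ' (some i) := by
  set b := 1 - 1 / H
  set γ := b ^ Dmax
  set x := μ' ∘ some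
  have hb0 : 0 < b := sub_pos.2 ((div_lt_one (by linarith)).2 hH)
  have hb1 : b ≤ 1 := sub_le_self _ (by positivity)
  have hγ0 : 0 ≤ γ := Real.rpow_nonneg hb0.le _
  have hγ1 : γ ≤ 1 := Real.rpow_le_one hb0.le hb1 hDmax
  have hγD i j : γ ≤ b ^ D i j := Real.rpow_le_rpow_of_exponent_ge hb0 hb1 (hD1 i j)
  have hx0 : 0 ≤ x := fun i ↦ hμ'.1 (some i)
  have hDhat0 : 0 ≤ Dhat P D := fun i ↦ sum_nonneg fun j _ ↦ mul_nonneg (hD0 i j) (hP.1 i j)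
  have hsub := hμ'.vecMul_comp_some_le fun j ↦ by
    simp only [PTMatrix]; split_ifs <;> norm_num
  have hsum0 i k : 0 ≤ (∑ m ∈ range N, Matrix.of P ^ m) i k := by
    rw [Matrix.sum_apply]; exact sum_nonneg fun m _ ↦ pow_apply_nonneg hP.1 m i k
  have hmass : γ ^ N * (c * Dhat P D j₀ * ∑ i, x i) ≤ N * (x ⬝ᵥ Dhat P D) :=
    pow_mul_mul_sum_le hP.1 hγ0 hγ1
      (fun i j ↦ mul_le_mul_of_nonneg_right (hγD i j) (hP.1 i j)) hx0 hsub hDhat0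
      fun i ↦ (mul_le_mul_of_nonneg_right (hc i) (hDhat0 j₀)).trans
        (apply_mul_le_mulVec_apply i j₀ (hsum0 i) hDhat0)
  have hhalf : 1 / 2 ≤ ∑ i, x i := hμ'.one_half_le_sum_PTMatrix hP hH.le
  have hPT : γ * (x ⬝ᵥ Dhat P D) ≤ ∑ i, DhatPT P D H i * x i := by
    rw [← smul_eq_mul, ← dotProduct_smul, dotProduct_comm]
    exact dotProduct_le_dotProduct_of_nonneg_right
      (rpow_mul_Dhat_le_DhatPT hP.1 hD0 hD1 hH) hx0
  have hp : 0 ≤ c * Dhat P D j₀ := mul_nonneg hc0 (hDhat0 j₀)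
  calc γ ^ (N + 1) * (c * Dhat P D j₀)
        = 2 * (γ ^ (N + 1) * (c * Dhat P D j₀)) * (1 / 2) := by ring
    _ ≤ 2 * (γ ^ (N + 1) * (c * Dhat P D j₀)) * ∑ i, x i := by gcongr
    _ = 2 * γ * (γ ^ N * (c * Dhat P D j₀ * ∑ i, x i)) := by ring
    _ ≤ 2 * γ * (N * (x ⬝ᵥ Dhat P D)) := by gcongr
    _ = 2 * N * (γ * (x ⬝ᵥ Dhat P D)) := by ring
    _ ≤ 2 * N * ∑ i, DhatPT P D H i * x i := by gcongr

theorem pt_average_difficulty_lower_bound_general {S : Type*} [Fintype S]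
    [DecidableEq S] (P D : S → S → ℝ) (Dmax : ℝ) (s₀ : S)
    (hP : RowStochastic P) (hirr : MatIrreducible P)
    (hD0 : ∀ i j, 0 ≤ D i j) (hD1 : ∀ i j, D i j ≤ Dmax)
    (hpos : ∃ i₀ j₀, 0 < P i₀ j₀ ∧ 0 < D i₀ j₀) :
    ∃ ε' > 0, ∃ H₀ > 1, ∀ H, H₀ ≤ H → ∀ μ' : Option S → ℝ,
      IsStationaryDist (PTMatrix P D H s₀) μ' →
      ε' < ∑ i, DhatPT P D H i * μ' (some i) := by
  obtain ⟨i₀, j₀, hP₀, hD₀⟩ := hpos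
  have hDhat : 0 < Dhat P D i₀ := (mul_pos hD₀ hP₀).trans_le <|
    single_le_sum (f := fun j ↦ D i₀ j * P i₀ j)
      (fun j _ ↦ mul_nonneg (hD0 i₀ j) (hP.1 i₀ j)) (mem_univ j₀)
  obtain ⟨N, hN, c, hc, hcN⟩ := hirr.exists_le_sum_pow_apply hP.1 i₀
  have hlim : Tendsto (fun H : ℝ ↦ ((1 - 1 / H) ^ Dmax) ^ (N + 1)) atTop (𝓝 1) := by
    have hb : Tendsto (fun H : ℝ ↦ 1 - 1 / H) atTop (𝓝 1) := by
      simpa using (tendsto_const_nhds (x := (1 : ℝ))).sub tendsto_inv_atTop_zero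
    simpa using (hb.rpow_const (Or.inl one_ne_zero)).pow (N + 1)
  obtain ⟨H₀, hH₀⟩ := eventually_atTop.1
    ((hlim.eventually (lt_mem_nhds one_half_lt_one)).and (eventually_gt_atTop 1))
  refine ⟨c * Dhat P D i₀ / (4 * N), by positivity, max H₀ 2, by simp, fun H hH μ' hμ' ↦ ?_⟩
  obtain ⟨hγ, hH1⟩ := hH₀ H (le_of_max_le_left hH)
  have hbound := pow_succ_mul_le_two_mul_sum_DhatPT_mul hP hD0 hD1
    ((hD0 i₀ j₀).trans (hD1 i₀ j₀)) hH1 hc.le hcN hμ'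
  rw [div_lt_iff₀ (by positivity)]
  nlinarith [mul_pos hc hDhat]

/-- **Lemma 5.** The average difficulty contribution per step of the PT chain is bounded
below by a positive constant, uniformly for all sufficiently large expected horizons. -/
theorem pt_average_difficulty_lower_bound {S : Type*} [Fintype S] [Nonempty S]
    [DecidableEq S] (P D : S → S → ℝ) (μ : S → ℝ) (Dmax ε : ℝ) (s₀ : S)
    (hP : RowStochastic P) (hirr : MatIrreducible P) (hμ : IsStationaryDist P μ)
    (hD0 : ∀ i j, 0 ≤ D i j) (hD1 : ∀ i j, D i j ≤ Dmax) (hDmax : 1 ≤ Dmax)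
    (hε : 0 < ε) (hεlt : ε < ∑ i, Dhat P D i * μ i)
    (hpos : ∃ i₀ j₀, 0 < P i₀ j₀ ∧ 0 < D i₀ j₀) :
    ∃ ε' > 0, ∃ H₀ > 1, ∀ H, H₀ ≤ H → ∀ μ' : Option S → ℝ,
      IsStationaryDist (PTMatrix P D H s₀) μ' →
      ε' < ∑ i, DhatPT P D H i * μ' (some i) :=
  pt_average_difficulty_lower_bound_general P D Dmax s₀ hP hirr hD0 hD1 hpos
end

section
/- Let S be a finite nonempty type, P : S → S → ℝ a row-stochastic irreducible matrix with stationary distribution μ, and R, D : S → S → ℝ with D i j ≥ 0 for all i, j and Σ_i D̂ i · μ i > 0, where R̂ i = Σ_j R i j · P i j and D̂ i = Σ_j D i j · P i j. Let κ be the Markov kernel on S with κ i = Σ_j P i j • δ_j, and let ℙ_μ be the law on trajectory space S^ℕ of the time-homogeneous Markov chain (X_t)_{t ≥ 0} with transition kernel κ and initial distribution μ. Then for ℙ_μ-almost every trajectory, the limit lim_{T→∞} (Σ_{t=0}^{T−1} R(X_t, X_{t+1})) / (Σ_{t=0}^{T−1} D(X_t, X_{t+1})) exists and equals (Σ_i R̂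 i · μ i) / (Σ_i D̂ i · μ i); in particular the expectation of this limit equals (Σ_i R̂ i · μ i) / (Σ_i D̂ i · μ i). -/
open Finset Filter MeasureTheory ProbabilityTheory

/-!
Fix `f = R` or `f = D` and put `c = ∑ i, f̂ i μ i`. Irreducibility makes every `P`-harmonic
function constant, so `1 - P` has a one-dimensional kernel and, by a dimension count, its range
is the hyperplane `{v | ⟨μ, v⟩ = 0}`; in particular the Poisson equation `g - P g = f̂ - c` has a
solution. Then `F i j = f i j + g j - g i - c` has mean zero along every row of `P`, so under
`ℙ_μ` the increments `F (X t) (X (t + 1))` are bounded and pairwise orthogonal, and Rajchman's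
strong law gives `(1 / T) ∑_{t < T} F (X t) (X (t + 1)) → 0` almost surely. The sums of `f`
and of `F + c` differ by the bounded telescoping term `g (X T) - g (X 0)`, so the ergodic
averages of `R` and `D` converge almost surely to their stationary means; the ratio of the
sums is the ratio of these averages, and its almost surely constant limit has that constant as
its expectation.
-/

namespace Matrix

variable {S : Type*} [Fintype S]

theorem exists_sub_mulVec_eq_of_dotProduct_eq_zero {M : Matrix S S ℝ}
    (hconst : ∀ h : S → ℝ, M *ᵥ h = h → ∀ i j, h i = h j)
    {μ : S → ℝ} (hμ : μ ᵥ* M = μ) (hμ1 : ∑ i, μ i = 1) {v : S → ℝ} (hv : μ ⬝ᵥ v = 0) :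
    ∃ g, g - M *ᵥ g = v := by
  let L : (S → ℝ) →ₗ[ℝ] S → ℝ := LinearMap.id - M.mulVecLin
  let φ : (S → ℝ) →ₗ[ℝ] ℝ := dotProductBilin ℝ ℝ μ
  have hrange : LinearMap.range L ≤ LinearMap.ker φ := by
    rintro _ ⟨g, rfl⟩
    simp [L, φ, dotProduct_sub, dotProduct_mulVec, hμ]
  have hker : LinearMap.ker L ≤ ℝ ∙ (1 : S → ℝ) := by
    intro h hh
    obtain ⟨i, -⟩ := Finset.exists_ne_zero_of_sum_ne_zero (hμ1 ▸ one_ne_zero)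
    exact Submodule.mem_span_singleton.2
      ⟨h i, funext fun j => by simp [hconst h (sub_eq_zero.1 hh).symm i j]⟩
  have hφ : LinearMap.range φ = ⊤ := by
    refine LinearMap.range_eq_top.2 fun c => ⟨fun _ => c, ?_⟩
    simp [φ, dotProduct, ← Finset.sum_mul, hμ1]
  have hdimL := L.finrank_range_add_finrank_ker
  have hdimφ := φ.finrank_range_add_finrank_ker
  rw [hφ, finrank_top, Module.finrank_self] at hdimφ
  have hdim_ker : Module.finrank ℝ (LinearMap.ker L) ≤ 1 :=
    (Submodule.finrank_mono hker).trans ((finrank_span_le_card _).trans (by simp))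
  have hrange_eq : LinearMap.range L = LinearMap.ker φ :=
    Submodule.eq_of_le_of_finrank_le hrange (by omega)
  obtain ⟨g, hg⟩ : v ∈ LinearMap.range L := hrange_eq ▸ hv
  exact ⟨g, hg⟩

variable [DecidableEq S]

theorem pow_mulVec_eq_self {M : Matrix S S ℝ} {h : S → ℝ} (hh : M *ᵥ h = h) (n : ℕ) :
    (M ^ n) *ᵥ h = h := by
  induction n with
  | zero => simp
  | succ n ih => rw [pow_succ, ← mulVec_mulVec, hh, ih]

theorem eq_of_mulVec_eq_self_of_forall_le {M : Matrix S S ℝ} (hM : M ∈ rowStochastic ℝ S)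
    {h : S → ℝ} (hh : M *ᵥ h = h) {i : S} (hmax : ∀ k, h k ≤ h i) {j : S} (hij : 0 < M i j) :
    h j = h i := by
  have hzero : ∑ k, M i k * (h i - h k) = 0 := by
    simp only [mul_sub, Finset.sum_sub_distrib, ← Finset.sum_mul,
      sum_row_of_mem_rowStochastic hM, one_mul]
    exact sub_eq_zero.2 (congrFun hh i).symm
  have hj := (Finset.sum_eq_zero_iff_of_nonneg fun k _ =>
    mul_nonneg (hM.1 i k) (sub_nonneg.2 (hmax k))).1 hzero j (Finset.mem_univ j)
  linarith [(mul_eq_zero.1 hj).resolve_left hij.ne']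

theorem eq_of_mulVec_eq_self {M : Matrix S S ℝ} (hM : M ∈ rowStochastic ℝ S)
    (hirr : ∀ i j, ∃ n, 0 < (M ^ n) i j) {h : S → ℝ} (hh : M *ᵥ h = h) (i j : S) :
    h i = h j := by
  obtain ⟨i₀, -, hi₀⟩ := Finset.exists_max_image Finset.univ h ⟨i, Finset.mem_univ i⟩
  have hmax (k : S) : h k = h i₀ := by
    obtain ⟨n, hn⟩ := hirr i₀ k
    exact eq_of_mulVec_eq_self_of_forall_le (pow_mem hM n) (pow_mulVec_eq_self hh n)
      (fun k => hi₀ k (Finset.mem_univ k)) hn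
  rw [hmax i, hmax j]

end Matrix

theorem abs_sum_le_card_mul {ι : Type*} (s : Finset ι) {Z : ι → ℝ} {K : ℝ}
    (hZ : ∀ t, |Z t| ≤ K) : |∑ t ∈ s, Z t| ≤ #s * K := by
  simpa using (abs_sum_le_sum_abs _ _).trans (sum_le_card_nsmul _ _ _ fun t _ => hZ t)

theorem tendsto_div_natCast_of_abs_le {u : ℕ → ℝ} {C : ℝ} (hu : ∀ n, |u n| ≤ C) :
    Tendsto (fun n : ℕ => u n / n) atTop (nhds 0) :=
  squeeze_zero_norm (fun n => by
    rw [Real.norm_eq_abs, abs_div, Nat.abs_cast]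
    exact div_le_div_of_nonneg_right (hu n) n.cast_nonneg)
    (tendsto_const_div_atTop_nhds_zero_nat C)

theorem abs_sum_range_div_le {Z : ℕ → ℝ} {K : ℝ} (hZ : ∀ t, |Z t| ≤ K) {T : ℕ} (hT : 1 ≤ T) :
    |(∑ t ∈ range T, Z t) / T| ≤
      |(∑ t ∈ range (T.sqrt ^ 2), Z t) / (T.sqrt ^ 2 : ℕ)| + 2 * K / T.sqrt := by
  set n := T.sqrt
  have hK : 0 ≤ K := (abs_nonneg _).trans (hZ 0)
  have hn : 0 < n := Nat.sqrt_pos.2 hT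
  have hle : n ^ 2 ≤ T := Nat.sqrt_le' T
  have hgap : T - n ^ 2 ≤ 2 * n := by
    have := Nat.lt_succ_sqrt' T
    rw [Nat.sub_le_iff_le_add]
    nlinarith
  have htail : |∑ t ∈ Ico (n ^ 2) T, Z t| ≤ 2 * n * K := by
    refine (abs_sum_le_card_mul _ hZ).trans (mul_le_mul_of_nonneg_right ?_ hK)
    rw [Nat.card_Ico]
    exact_mod_cast hgap
  have hnT : ((n ^ 2 : ℕ) : ℝ) ≤ T := by exact_mod_cast hle
  have hn2 : (0 : ℝ) < (n ^ 2 : ℕ) := by positivity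
  rw [← sum_range_add_sum_Ico _ hle]
  calc |(∑ t ∈ range (n ^ 2), Z t + ∑ t ∈ Ico (n ^ 2) T, Z t) / T|
      ≤ (|∑ t ∈ range (n ^ 2), Z t| + 2 * n * K) / T := by
        rw [abs_div, Nat.abs_cast]
        gcongr
        exact (abs_add_le _ _).trans (by linarith)
    _ ≤ (|∑ t ∈ range (n ^ 2), Z t| + 2 * n * K) / (n ^ 2 : ℕ) := by gcongr
    _ = _ := by
        rw [abs_div, Nat.abs_cast, add_div]
        congr 1
        push_cast
        field_simp

theorem tendsto_sum_range_div_of_tendsto_sq {Z : ℕ → ℝ} {K : ℝ} (hZ : ∀ t, |Z t| ≤ K)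
    (hsq : Tendsto (fun n => (∑ t ∈ range (n ^ 2), Z t) / (n ^ 2 : ℕ)) atTop (nhds 0)) :
    Tendsto (fun T => (∑ t ∈ range T, Z t) / T) atTop (nhds 0) := by
  have hsqrt : Tendsto Nat.sqrt atTop atTop :=
    tendsto_atTop_atTop_of_monotone (fun _ _ h => Nat.sqrt_le_sqrt h)
      (fun b => ⟨b * b, (Nat.sqrt_eq b).ge⟩)
  have hbound := (hsq.abs.add (tendsto_const_div_atTop_nhds_zero_nat (2 * K))).comp hsqrt
  rw [abs_zero, zero_add] at hbound
  exact squeeze_zero_norm' ((eventually_ge_atTop 1).mono fun T hT => abs_sum_range_div_le hZ hT)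
    hbound

section Orthogonal

variable {Ω : Type*} [MeasurableSpace Ω] {μ : Measure Ω}

theorem ae_tendsto_zero_of_summable_integral_sq {Y : ℕ → Ω → ℝ}
    (hmeas : ∀ n, AEMeasurable (Y n) μ) (hint : ∀ n, Integrable (fun ω => Y n ω ^ 2) μ)
    (hsum : Summable fun n => ∫ ω, Y n ω ^ 2 ∂μ) :
    ∀ᵐ ω ∂μ, Tendsto (fun n => Y n ω) atTop (nhds 0) := by
  have hmeas_sq (n : ℕ) : AEMeasurable (fun ω => ENNReal.ofReal (Y n ω ^ 2)) μ :=
    ((hmeas n).pow_const 2).ennreal_ofReal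
  have hlint : ∫⁻ ω, ∑' n, ENNReal.ofReal (Y n ω ^ 2) ∂μ ≠ ⊤ := by
    rw [lintegral_tsum hmeas_sq]
    simp_rw [← ofReal_integral_eq_lintegral_ofReal (hint _) (ae_of_all _ fun ω => sq_nonneg _)]
    rw [← ENNReal.ofReal_tsum_of_nonneg (fun n => integral_nonneg fun ω => sq_nonneg _) hsum]
    exact ENNReal.ofReal_ne_top
  filter_upwards [ae_lt_top' (AEMeasurable.tsum hmeas_sq) hlint] with ω hω
  have hsum_ω : Summable fun n => Y n ω ^ 2 := by
    simpa [ENNReal.toReal_ofReal (sq_nonneg _)] using ENNReal.summable_toReal hω.ne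
  rw [tendsto_zero_iff_abs_tendsto_zero]
  simpa [Function.comp_def, Real.sqrt_sq_eq_abs] using hsum_ω.tendsto_atTop_zero.sqrt

variable [IsProbabilityMeasure μ] {Z : ℕ → Ω → ℝ} {K : ℝ}

theorem integral_sq_sum_range_le_of_pairwise_orthogonal (hmeas : ∀ t, Measurable (Z t))
    (hZ : ∀ t ω, |Z t ω| ≤ K) (horth : Pairwise fun t u => ∫ ω, Z t ω * Z u ω ∂μ = 0)
    (n : ℕ) : ∫ ω, (∑ t ∈ range n, Z t ω) ^ 2 ∂μ ≤ n * K ^ 2 := by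
  have hsq (t ω) : Z t ω * Z t ω ≤ K ^ 2 := by
    rw [← sq, ← sq_abs]
    exact pow_le_pow_left₀ (abs_nonneg _) (hZ t ω) 2
  have hint (t u) : Integrable (fun ω => Z t ω * Z u ω) μ :=
    .of_bound ((hmeas t).mul (hmeas u)).aestronglyMeasurable (K * K) (ae_of_all _ fun ω => by
      rw [Real.norm_eq_abs, abs_mul]
      exact mul_le_mul (hZ t ω) (hZ u ω) (abs_nonneg _) ((abs_nonneg _).trans (hZ t ω)))
  calc ∫ ω, (∑ t ∈ range n, Z t ω) ^ 2 ∂μ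
      = ∑ t ∈ range n, ∑ u ∈ range n, ∫ ω, Z t ω * Z u ω ∂μ := by
        simp_rw [sq, sum_mul_sum]
        rw [integral_finsetSum _ fun t _ => integrable_finsetSum _ fun u _ => hint t u]
        exact sum_congr rfl fun t _ => integral_finsetSum _ fun u _ => hint t u
    _ = ∑ t ∈ range n, ∫ ω, Z t ω * Z t ω ∂μ :=
        sum_congr rfl fun t ht => sum_eq_single t (fun u _ hut => horth hut.symm)
          (fun h => absurd ht h)
    _ ≤ ∑ t ∈ range n, K ^ 2 := sum_le_sum fun t _ =>
        (integral_mono (hint t t) (integrable_const _) (hsq t)).trans (by simp)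
    _ = n * K ^ 2 := by simp

/-- Rajchman's strong law: the bounds `∫ (∑_{t < n²} Z t / n²)² ≤ K² / n²` are summable, so the
averages converge almost surely along the squares, and `|Z t| ≤ K` bridges the gaps. -/
theorem ae_tendsto_sum_range_div_of_pairwise_orthogonal (hmeas : ∀ t, Measurable (Z t))
    (hZ : ∀ t ω, |Z t ω| ≤ K) (horth : Pairwise fun t u => ∫ ω, Z t ω * Z u ω ∂μ = 0) :
    ∀ᵐ ω ∂μ, Tendsto (fun T : ℕ => (∑ t ∈ range T, Z t ω) / T) atTop (nhds 0) := by
  have hmeas_sum (n : ℕ) : Measurable fun ω => ∑ t ∈ range n, Z t ω :=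
    Finset.measurable_sum _ fun t _ => hmeas t
  have hint (n : ℕ) : Integrable (fun ω => (∑ t ∈ range n, Z t ω) ^ 2) μ := by
    refine .of_bound ((hmeas_sum n).pow_const 2).aestronglyMeasurable ((n * K) ^ 2)
      (ae_of_all _ fun ω => ?_)
    rw [Real.norm_eq_abs, abs_pow, ← sq_abs]
    exact pow_le_pow_left₀ (abs_nonneg _) (by simpa using abs_sum_le_card_mul (range n) (hZ · ω)) 2
  have hsq_bound (n : ℕ) :
      ∫ ω, ((∑ t ∈ range (n ^ 2), Z t ω) / (n ^ 2 : ℕ)) ^ 2 ∂μ ≤ K ^ 2 * (1 / n ^ 2) := by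
    simp_rw [div_pow]
    rw [integral_div]
    rcases Nat.eq_zero_or_pos n with rfl | hn
    · simp
    calc (∫ ω, (∑ t ∈ range (n ^ 2), Z t ω) ^ 2 ∂μ) / ((n ^ 2 : ℕ) : ℝ) ^ 2
        ≤ (n ^ 2 : ℕ) * K ^ 2 / ((n ^ 2 : ℕ) : ℝ) ^ 2 := by
          gcongr
          exact integral_sq_sum_range_le_of_pairwise_orthogonal hmeas hZ horth _
      _ = K ^ 2 * (1 / n ^ 2) := by
          field_simp
          push_cast
          ring
  have hsq := ae_tendsto_zero_of_summable_integral_sq (μ := μ)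
    (Y := fun n ω => (∑ t ∈ range (n ^ 2), Z t ω) / (n ^ 2 : ℕ))
    (fun n => ((hmeas_sum _).div_const _).aemeasurable)
    (fun n => by simpa [div_pow] using (hint (n ^ 2)).div_const (((n : ℝ) ^ 2) ^ 2))
    (.of_nonneg_of_le (fun n => integral_nonneg fun ω => sq_nonneg _) hsq_bound
      ((Real.summable_one_div_nat_pow.2 one_lt_two).mul_left (K ^ 2)))
  filter_upwards [hsq] with ω hω
  exact tendsto_sum_range_div_of_tendsto_sq (hZ · ω) hω

end Orthogonal

theorem Fintype.sum_fin_succ_pi_eq_sum_snoc {α : Type*} [Fintype α] (n : ℕ)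
    (F : (Fin (n + 1) → α) → ℝ) : ∑ x, F x = ∑ x : Fin n → α, ∑ a, F (Fin.snoc x a) := by
  rw [← (Fin.snocEquiv fun _ => α).sum_comp, Fintype.sum_prod_type, Finset.sum_comm]
  rfl

section MarkovChain

variable {S : Type*}

def IsMarkovChainLaw [MeasurableSpace S] (P : S → S → ℝ) (μ : S → ℝ) (Pr : Measure (ℕ → S)) :
    Prop :=
  ∀ (n : ℕ) (x : ℕ → S),
    (Pr {ω | ∀ k ≤ n, ω k = x k}).toReal = μ (x 0) * ∏ k ∈ range n, P (x k) (x (k + 1))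

def pathWeight (P : S → S → ℝ) (μ : S → ℝ) (n : ℕ) (x : Fin (n + 1) → S) : ℝ :=
  μ (x 0) * ∏ k : Fin n, P (x k.castSucc) (x k.succ)

theorem pathWeight_snoc (P : S → S → ℝ) (μ : S → ℝ) (n : ℕ) (x : Fin (n + 1) → S) (s : S) :
    pathWeight P μ (n + 1) (Fin.snoc x s) = pathWeight P μ n x * P (x (Fin.last n)) s := by
  rw [pathWeight, pathWeight, Fin.prod_univ_castSucc,
    show (0 : Fin (n + 2)) = Fin.castSucc 0 from rfl]
  simp only [Fin.snoc_castSucc, Fin.snoc_last, Fin.succ_castSucc, Fin.succ_last]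
  ring

variable [Fintype S] [MeasurableSpace S] [MeasurableSingletonClass S] {P : S → S → ℝ}
  {μ : S → ℝ} {Pr : Measure (ℕ → S)} [IsProbabilityMeasure Pr]

theorem integral_comp_eq_sum_pathWeight (hlaw : IsMarkovChainLaw P μ Pr) (n : ℕ)
    (H : (Fin (n + 1) → S) → ℝ) :
    ∫ ω, H (fun k => ω k) ∂Pr = ∑ x, pathWeight P μ n x * H x := by
  let π : (ℕ → S) → Fin (n + 1) → S := fun ω k => ω k
  have hπ : Measurable π := measurable_pi_lambda _ fun k => measurable_pi_apply _
  rw [← integral_map hπ.aemeasurable (measurable_of_finite H).aestronglyMeasurable,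
    integral_fintype Integrable.of_finite]
  refine sum_congr rfl fun x _ => ?_
  have hclamp (k : ℕ) (hk : k ≤ n) : Fin.clamp k n = ⟨k, Nat.lt_succ_of_le hk⟩ :=
    Fin.ext (Nat.min_eq_left hk)
  -- `x` extended to a whole path by `k ↦ x (min k n)`
  have hcyl : π ⁻¹' {x} = {ω | ∀ k ≤ n, ω k = x (Fin.clamp k n)} := by
    ext ω
    simp only [Set.mem_preimage, Set.mem_singleton_iff, Set.mem_ofPred_eq, funext_iff, π]
    refine ⟨fun h k hk => ?_, fun h k => ?_⟩
    · rw [hclamp k hk]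
      exact h ⟨k, _⟩
    · rw [h k k.is_le, hclamp k k.is_le]
  rw [measureReal_def, Measure.map_apply hπ (MeasurableSet.singleton x), hcyl, hlaw, smul_eq_mul,
    pathWeight, ← Fin.prod_univ_eq_prod_range]
  simp only [hclamp 0 n.zero_le, fun i : Fin n => hclamp i i.isLt.le,
    fun i : Fin n => hclamp (i + 1) i.isLt]
  rfl

theorem integral_mul_eq_zero_of_sum_mul_eq_zero (hlaw : IsMarkovChainLaw P μ Pr)
    {F : S → S → ℝ} (hF : ∀ i, ∑ s, P i s * F i s = 0) (k : ℕ) (G : (Fin (k + 1) → S) → ℝ) :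
    ∫ ω, G (fun i => ω i) * F (ω k) (ω (k + 1)) ∂Pr = 0 := by
  refine (integral_comp_eq_sum_pathWeight hlaw (k + 1)
    fun x => G (Fin.init x) * F (x (Fin.last k).castSucc) (x (Fin.last (k + 1)))).trans ?_
  rw [Fintype.sum_fin_succ_pi_eq_sum_snoc]
  refine sum_eq_zero fun x _ => ?_
  simp only [pathWeight_snoc, Fin.init_snoc, Fin.snoc_castSucc, Fin.snoc_last]
  simp_rw [mul_assoc, ← mul_sum, mul_left_comm _ (G x), ← mul_sum, hF, mul_zero]

theorem pairwise_integral_mul_eq_zero (hlaw : IsMarkovChainLaw P μ Pr) {F : S → S → ℝ}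
    (hF : ∀ i, ∑ s, P i s * F i s = 0) :
    Pairwise fun t u => ∫ ω, F (ω t) (ω (t + 1)) * F (ω u) (ω (u + 1)) ∂Pr = 0 := by
  have hlt {t u : ℕ} (htu : t < u) :
      ∫ ω, F (ω t) (ω (t + 1)) * F (ω u) (ω (u + 1)) ∂Pr = 0 :=
    integral_mul_eq_zero_of_sum_mul_eq_zero hlaw hF u
      fun x => F (x ⟨t, by omega⟩) (x ⟨t + 1, by omega⟩)
  intro t u htu
  rcases htu.lt_or_gt with htu | hut
  · exact hlt htu
  · simpa only [mul_comm] using hlt hut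

theorem ae_tendsto_sum_range_div_of_isMarkovChainLaw [DecidableEq S] (hP : RowStochastic P)
    (hirr : MatIrreducible P) (hμ : MatIsStationary P μ) (hlaw : IsMarkovChainLaw P μ Pr)
    (f : S → S → ℝ) :
    ∀ᵐ ω ∂Pr, Tendsto (fun T : ℕ => (∑ t ∈ range T, f (ω t) (ω (t + 1))) / T) atTop
      (nhds (∑ i, (∑ j, f i j * P i j) * μ i)) := by
  set c := ∑ i, (∑ j, f i j * P i j) * μ i
  have hM : Matrix.of P ∈ Matrix.rowStochastic ℝ S := Matrix.mem_rowStochastic_iff_sum.2 hP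
  obtain ⟨g, hg⟩ := Matrix.exists_sub_mulVec_eq_of_dotProduct_eq_zero
    (fun _ => Matrix.eq_of_mulVec_eq_self hM fun i j => (hirr i j).imp fun _ hn => hn.2)
    (funext hμ.2.2) hμ.2.1 (v := fun i => ∑ j, f i j * P i j - c)
    (by simp [dotProduct, mul_sub, ← sum_mul, hμ.2.1, c, mul_comm])
  set F : S → S → ℝ := fun i s => f i s + g s - g i - c
  have hF (i : S) : ∑ s, P i s * F i s = 0 := by
    have hgi : g i - ∑ j, P i j * g j = ∑ j, f i j * P i j - c := congrFun hg i
    simp only [F, mul_sub, mul_add, sum_sub_distrib, sum_add_distrib, ← sum_mul, hP.2 i,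
      mul_comm (P i _) (f i _)]
    linarith
  obtain ⟨K, hK⟩ := Finite.exists_le fun p : S × S => |F p.1 p.2|
  obtain ⟨Kg, hKg⟩ := Finite.exists_le fun i => |g i|
  have hmeas (t : ℕ) : Measurable fun ω : ℕ → S => F (ω t) (ω (t + 1)) :=
    (measurable_of_finite (Function.uncurry F)).comp (f := fun ω : ℕ → S => (ω t, ω (t + 1)))
      (by fun_prop)
  filter_upwards [ae_tendsto_sum_range_div_of_pairwise_orthogonal hmeas
    (fun t ω => hK (ω t, ω (t + 1))) (pairwise_integral_mul_eq_zero hlaw hF)] with ω hω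
  have hboundary : Tendsto (fun T : ℕ => (g (ω 0) - g (ω T)) / T) atTop (nhds 0) :=
    tendsto_div_natCast_of_abs_le fun T =>
      (abs_sub _ _).trans (add_le_add (hKg (ω 0)) (hKg (ω T)))
  have htelescope (T : ℕ) : ∑ t ∈ range T, F (ω t) (ω (t + 1)) =
      ∑ t ∈ range T, f (ω t) (ω (t + 1)) + (g (ω T) - g (ω 0)) - T * c := by
    rw [← sum_range_sub (fun t => g (ω t))]
    simp [F, sum_add_distrib, sum_sub_distrib]
    ring
  refine Tendsto.congr' ?_ (by simpa using (hω.add hboundary).add_const c)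
  filter_upwards [eventually_ge_atTop 1] with T hT
  rw [htelescope]
  field_simp
  ring

end MarkovChain

theorem arr_revenue_formula_general {S : Type*} [Fintype S] [DecidableEq S]
    [MeasurableSpace S] [MeasurableSingletonClass S]
    (P R D : S → S → ℝ) (μ : S → ℝ)
    (hP : RowStochastic P) (hirr : MatIrreducible P) (hμ : MatIsStationary P μ)
    (hDpos : 0 < ∑ i, Dhat P D i * μ i)
    (Pr : Measure (ℕ → S)) [IsProbabilityMeasure Pr]
    (hlaw : ∀ (n : ℕ) (x : ℕ → S),
      (Pr {ω | ∀ k ≤ n, ω k = x k}).toReal =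
        μ (x 0) * ∏ k ∈ Finset.range n, P (x k) (x (k + 1))) :
    (∀ᵐ ω ∂Pr, Tendsto
        (fun T => (∑ t ∈ Finset.range T, R (ω t) (ω (t + 1))) /
          (∑ t ∈ Finset.range T, D (ω t) (ω (t + 1))))
        atTop
        (nhds ((∑ i, Rhat P R i * μ i) / (∑ i, Dhat P D i * μ i)))) ∧
      (∫ ω, limUnder atTop
          (fun T => (∑ t ∈ Finset.range T, R (ω t) (ω (t + 1))) /
            (∑ t ∈ Finset.range T, D (ω t) (ω (t + 1)))) ∂Pr) =
        (∑ i, Rhat P R i * μ i) / (∑ i, Dhat P D i * μ i) := by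
  have hratio : ∀ᵐ ω ∂Pr, Tendsto
      (fun T => (∑ t ∈ Finset.range T, R (ω t) (ω (t + 1))) /
        (∑ t ∈ Finset.range T, D (ω t) (ω (t + 1))))
      atTop (nhds ((∑ i, Rhat P R i * μ i) / (∑ i, Dhat P D i * μ i))) := by
    filter_upwards [ae_tendsto_sum_range_div_of_isMarkovChainLaw hP hirr hμ hlaw R,
      ae_tendsto_sum_range_div_of_isMarkovChainLaw hP hirr hμ hlaw D] with ω hR hD
    refine (hR.div hD hDpos.ne').congr' ?_
    filter_upwards [eventually_ge_atTop 1] with T hT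
    exact div_div_div_cancel_right₀ (by positivity) _ _
  refine ⟨hratio, ?_⟩
  rw [integral_congr_ae (hratio.mono fun ω h => h.limUnder_eq), integral_const]
  simp

/-- **Lemma 6 (REV_ARR).** For the stationary Markov chain with transition matrix `P`
and initial (stationary) distribution `μ` — whose trajectory law `Pr` on `ℕ → S` is
characterized by its finite-dimensional distributions — the ratio of accumulated rewards
to accumulated difficulty contributions converges almost surely to
`⟨R̂, μ⟩ / ⟨D̂, μ⟩`, and the expectation of the limit equals that ratio. -/
theorem arr_revenue_formula {S : Type*} [Fintype S] [Nonempty S] [DecidableEq S]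
    [MeasurableSpace S] [MeasurableSingletonClass S]
    (P R D : S → S → ℝ) (μ : S → ℝ)
    (hP : RowStochastic P) (hirr : MatIrreducible P) (hμ : MatIsStationary P μ)
    (hD0 : ∀ i j, 0 ≤ D i j)
    (hDpos : 0 < ∑ i, Dhat P D i * μ i)
    (Pr : Measure (ℕ → S)) [IsProbabilityMeasure Pr]
    (hlaw : ∀ (n : ℕ) (x : ℕ → S),
      (Pr {ω | ∀ k ≤ n, ω k = x k}).toReal =
        μ (x 0) * ∏ k ∈ Finset.range n, P (x k) (x (k + 1))) :
    (∀ᵐ ω ∂Pr, Tendsto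
        (fun T => (∑ t ∈ Finset.range T, R (ω t) (ω (t + 1))) /
          (∑ t ∈ Finset.range T, D (ω t) (ω (t + 1))))
        atTop
        (nhds ((∑ i, Rhat P R i * μ i) / (∑ i, Dhat P D i * μ i)))) ∧
      (∫ ω, limUnder atTop
          (fun T => (∑ t ∈ Finset.range T, R (ω t) (ω (t + 1))) /
            (∑ t ∈ Finset.range T, D (ω t) (ω (t + 1)))) ∂Pr) =
        (∑ i, Rhat P R i * μ i) / (∑ i, Dhat P D i * μ i) :=
  arr_revenue_formula_general P R D μ hP hirr hμ hDpos Pr hlaw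
end

section
/- Let x, d, m, rev, ε, Rmax, Dmax, H be real numbers with H > 1, ε > 0, Dmax ≥ 1, 0 ≤ x ≤ Rmax, d ≥ ε, 0 ≤ m ≤ Dmax/(H − 1), d − Dmax·m ≥ ε, and x/(d + (Dmax + 1)·m) ≤ rev ≤ x/(d − Dmax·m). Then |rev − x/d| ≤ 3 · Dmax² · Rmax / (ε² · (H − 1)). -/
/-! Both ends of the sandwich differ from `x / d` by `x` times the gap of the denominators over
their product, which is at least `ε ^ 2`. The gaps are `Dmax * m` and `(Dmax + 1) * m ≤ 2 * Dmax * m`,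
and `m ≤ Dmax / (H - 1)`, so the two one-sided errors are at most `B` and `2 * B` with
`B = Dmax ^ 2 * Rmax / (ε ^ 2 * (H - 1))`. -/

lemma div_sub_div_le_mul_sub_div_sq {x a b ε : ℝ} (hx : 0 ≤ x) (hε : 0 < ε) (ha : ε ≤ a)
    (hab : a ≤ b) : x / a - x / b ≤ x * (b - a) / ε ^ 2 := by
  have ha0 : 0 < a := hε.trans_le ha
  have hb0 : 0 < b := ha0.trans_le hab
  rw [div_sub_div _ _ ha0.ne' hb0.ne', show x * b - a * x = x * (b - a) by ring, sq]
  exact div_le_div_of_nonneg_left (mul_nonneg hx (sub_nonneg.mpr hab)) (by positivity)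
    (mul_le_mul ha (ha.trans hab) hε.le ha0.le)

/-- Algebraic core of Lemma 7: if the PT revenue `rev` is sandwiched between
`x / (d + (Dmax + 1) * m)` and `x / (d - Dmax * m)`, where `m ≤ Dmax / (H - 1)` is the
stationary mass of the terminal state, then `rev` is within
`3 * Dmax ^ 2 * Rmax / (ε ^ 2 * (H - 1))` of `x / d`. -/
theorem pt_revenue_sandwich_bound (x d m rev ε Rmax Dmax H : ℝ)
    (hH : 1 < H) (hε : 0 < ε) (hDmax : 1 ≤ Dmax)
    (hx0 : 0 ≤ x) (hx1 : x ≤ Rmax) (hd : ε ≤ d)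
    (hm0 : 0 ≤ m) (hm1 : m ≤ Dmax / (H - 1))
    (hdm : ε ≤ d - Dmax * m)
    (hrev1 : x / (d + (Dmax + 1) * m) ≤ rev) (hrev2 : rev ≤ x / (d - Dmax * m)) :
    |rev - x / d| ≤ 3 * Dmax ^ 2 * Rmax / (ε ^ 2 * (H - 1)) := by
  have hH1 : 0 < H - 1 := sub_pos.mpr hH
  have hR : 0 ≤ Rmax := hx0.trans hx1
  set B := Dmax ^ 2 * Rmax / (ε ^ 2 * (H - 1)) with hB
  have hB0 : 0 ≤ B := by positivity
  have upper : rev - x / d ≤ B :=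
    calc rev - x / d ≤ x / (d - Dmax * m) - x / d := by linarith
      _ ≤ x * (d - (d - Dmax * m)) / ε ^ 2 :=
        div_sub_div_le_mul_sub_div_sq hx0 hε hdm
          (sub_le_self d (mul_nonneg (by linarith) hm0))
      _ = x * (Dmax * m) / ε ^ 2 := by ring
      _ ≤ Rmax * (Dmax * (Dmax / (H - 1))) / ε ^ 2 := by gcongr
      _ = B := by rw [hB]; field_simp
  have lower : x / d - rev ≤ 2 * B :=
    calc x / d - rev ≤ x / d - x / (d + (Dmax + 1) * m) := by linarith
      _ ≤ x * (d + (Dmax + 1) * m - d) / ε ^ 2 :=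
        div_sub_div_le_mul_sub_div_sq hx0 hε hd
          (le_add_of_nonneg_right (mul_nonneg (by linarith) hm0))
      _ = x * ((Dmax + 1) * m) / ε ^ 2 := by ring
      _ ≤ Rmax * (2 * Dmax * (Dmax / (H - 1))) / ε ^ 2 := by gcongr; linarith
      _ = 2 * B := by rw [hB]; field_simp
  rw [abs_sub_le_iff, show 3 * Dmax ^ 2 * Rmax / (ε ^ 2 * (H - 1)) = 3 * B by rw [hB]; ring]
  constructor <;> linarith
end

section
/- Let S be a finite nonempty type, P : S → S → ℝ a row-stochastic matrix, D : S → S → ℝ with 0 ≤ D i j ≤ Dmax for a real Dmax ≥ 1, H > 1 a real number, and s₀ ∈ S. Then every stationary distribution μ' of the probabilistic-termination matrix P'_H on Option S satisfies μ' none ≤ Dmax / (H − 1). -/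
open Finset Filter MeasureTheory ProbabilityTheory

/-!
By Bernoulli's inequality, from every state the PT chain moves to the terminal state with
probability at most `Dmax / H`; the stationary mass of a state is a convex combination of the
probabilities of entering it, so it obeys the same bound, and `Dmax / H ≤ Dmax / (H - 1)`.
-/

theorem IsStationaryDistr.apply_le_of_forall_le {T : Type*} [Fintype T] {Q : T → T → ℝ}
    {ν : T → ℝ} (hν : IsStationaryDistr Q ν) {j : T} {c : ℝ} (hc : ∀ i, Q i j ≤ c) :
    ν j ≤ c := by
  obtain ⟨hν_nonneg, hν_sum, hν_stat⟩ := hν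
  calc ν j = ∑ i, ν i * Q i j := (hν_stat j).symm
    _ ≤ ∑ i, ν i * c := sum_le_sum fun i _ => mul_le_mul_of_nonneg_left (hc i) (hν_nonneg i)
    _ = c := by rw [← sum_mul, hν_sum, one_mul]

theorem one_sub_rpow_one_sub_le {t p d : ℝ} (ht₀ : 0 ≤ t) (ht₁ : t < 1) (hp : 1 ≤ p)
    (hd : d ≤ p) : 1 - (1 - t) ^ d ≤ p * t := by
  have h_mono : (1 - t) ^ p ≤ (1 - t) ^ d :=
    Real.rpow_le_rpow_of_exponent_ge (by linarith) (by linarith) hd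
  have h_bernoulli : 1 + p * -t ≤ (1 + -t) ^ p :=
    one_add_mul_self_le_rpow_one_add (by linarith) hp
  rw [← sub_eq_add_neg] at h_bernoulli
  linarith

theorem PTMatrix_some_none_le {S : Type*} [Fintype S] [DecidableEq S] {P D : S → S → ℝ}
    {Dmax H : ℝ} (s₀ : S) (hP : RowStochastic P) {i : S} (hD : ∀ j, D i j ≤ Dmax)
    (hDmax : 1 ≤ Dmax) (hH : 1 < H) : PTMatrix P D H s₀ (some i) none ≤ Dmax / H := by
  have h_inv : 0 ≤ 1 / H ∧ 1 / H < 1 := ⟨by positivity, (div_lt_one (by linarith)).2 hH⟩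
  calc PTMatrix P D H s₀ (some i) none = ∑ j, (1 - (1 - 1 / H) ^ D i j) * P i j := rfl
    _ ≤ ∑ j, Dmax / H * P i j := by
      refine sum_le_sum fun j _ => mul_le_mul_of_nonneg_right ?_ (hP.1 i j)
      rw [div_eq_mul_one_div Dmax H]
      exact one_sub_rpow_one_sub_le h_inv.1 h_inv.2 hDmax (hD j)
    _ = Dmax / H := by rw [← mul_sum, hP.2 i, mul_one]

theorem pt_terminal_state_stationary_mass_bound_general {S : Type*} [Fintype S]
    [DecidableEq S] (P D : S → S → ℝ) (Dmax H : ℝ) (s₀ : S)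
    (hP : RowStochastic P)
    (hD1 : ∀ i j, D i j ≤ Dmax)
    (hDmax : 1 ≤ Dmax) (hH : 1 < H) :
    ∀ μ' : Option S → ℝ, IsStationaryDistr (PTMatrix P D H s₀) μ' →
      μ' none ≤ Dmax / (H - 1) := by
  intro μ' hμ'
  have h_col : ∀ i, PTMatrix P D H s₀ i none ≤ Dmax / H
    | none => div_nonneg (by linarith) (by linarith)
    | some i => PTMatrix_some_none_le s₀ hP (hD1 i) hDmax hH
  calc μ' none ≤ Dmax / H := hμ'.apply_le_of_forall_le h_col
    _ ≤ Dmax / (H - 1) := div_le_div_of_nonneg_left (by linarith) (by linarith) (by linarith)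

/-- Bound on the stationary probability of the terminal state of the PT chain:
`μ' none ≤ Dmax / (H - 1)`. -/
theorem pt_terminal_state_stationary_mass_bound {S : Type*} [Fintype S] [Nonempty S]
    [DecidableEq S] (P D : S → S → ℝ) (Dmax H : ℝ) (s₀ : S)
    (hP : RowStochastic P)
    (hD0 : ∀ i j, 0 ≤ D i j) (hD1 : ∀ i j, D i j ≤ Dmax)
    (hDmax : 1 ≤ Dmax) (hH : 1 < H) :
    ∀ μ' : Option S → ℝ, IsStationaryDistr (PTMatrix P D H s₀) μ' →
      μ' none ≤ Dmax / (H - 1) :=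
  pt_terminal_state_stationary_mass_bound_general P D Dmax H s₀ hP hD1 hDmax hH
end
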